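/- arXiv:1209.2033 — 10 statements merged into one kernel-verified Lean document; each statement's English description precedes it below -/
import Mathlib

section
/- In every edge-coloring of the complete 3-uniform hypergraph on 16 vertices with 3 colors, there is a matching of size 5 using edges of at most 2 colors. -/
namespace TCM

abbrev V := Fin 16

def Win (χ : Finset V → Fin 3) : Prop :=
  ∃ M : Finset (Finset V), M.card = 5 ∧
      (∀ e ∈ M, e.card = 3) ∧
      (∀ e ∈ M, ∀ f ∈ M, e ≠ f → Disjoint e f) ∧
      ∃ c₁ c₂ : Fin 3, ∀ e ∈ M, χ e = c₁ ∨ χ e = c₂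

lemma ne_of_mem_disj {s t : Finset V} {a b : V} (h : Disjoint s t) (ha : a ∈ s) (hb : b ∈ t) :
    a ≠ b := fun e => (Finset.disjoint_left.mp h ha) (e ▸ hb)

lemma triple_ne {s t : Finset V} (hs : s.card = 3) (h : Disjoint s t) : s ≠ t := by
  rintro rfl
  have : s = ∅ := Finset.eq_empty_of_forall_notMem (fun x hx => Finset.disjoint_left.mp h hx hx)
  rw [this] at hs; simp at hs

lemma card3 {a b c : V} (hab : a ≠ b) (hac : a ≠ c) (hbc : b ≠ c) :
    ({a, b, c} : Finset V).card = 3 := by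
  rw [Finset.card_insert_of_notMem (by simp [hab, hac]),
    Finset.card_insert_of_notMem (by simp [hbc]), Finset.card_singleton]

lemma disj33 {a b c d e f : V} (h1 : a ≠ d) (h2 : a ≠ e) (h3 : a ≠ f)
    (h4 : b ≠ d) (h5 : b ≠ e) (h6 : b ≠ f) (h7 : c ≠ d) (h8 : c ≠ e) (h9 : c ≠ f) :
    Disjoint ({a, b, c} : Finset V) {d, e, f} := by
  simp only [Finset.disjoint_left, Finset.mem_insert, Finset.mem_singleton]
  rintro x (rfl | rfl | rfl) (h | h | h) <;> simp_all

lemma card4 {s : Finset V} (h : s.card = 4) :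
    ∃ a b c d : V, a ≠ b ∧ a ≠ c ∧ a ≠ d ∧ b ≠ c ∧ b ≠ d ∧ c ≠ d ∧ s = {a, b, c, d} := by
  have hpos : 0 < s.card := by omega
  obtain ⟨a, ha⟩ := Finset.card_pos.mp hpos
  have h3 : (s.erase a).card = 3 := by rw [Finset.card_erase_of_mem ha, h]
  obtain ⟨b, c, d, hbc, hbd, hcd, he⟩ := Finset.card_eq_three.mp h3
  have hb : b ∈ s.erase a := by rw [he]; simp
  have hc : c ∈ s.erase a := by rw [he]; simp
  have hd : d ∈ s.erase a := by rw [he]; simp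
  refine ⟨a, b, c, d, ?_, ?_, ?_, hbc, hbd, hcd, ?_⟩
  · exact fun e => (Finset.ne_of_mem_erase hb) e.symm
  · exact fun e => (Finset.ne_of_mem_erase hc) e.symm
  · exact fun e => (Finset.ne_of_mem_erase hd) e.symm
  · have : s = insert a (s.erase a) := (Finset.insert_erase ha).symm
    rw [this, he]

lemma fin3_third {p s z a : Fin 3} (hps : p ≠ s) (hzp : z ≠ p) (hzs : z ≠ s)
    (hap : a ≠ p) (has : a ≠ s) : a = z := by
  fin_cases p <;> fin_cases s <;> fin_cases z <;> fin_cases a <;> simp_all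

lemma fin3_cover {x y z a : Fin 3} (hxy : x ≠ y) (hzx : z ≠ x) (hzy : z ≠ y) :
    a = x ∨ a = y ∨ a = z := by
  fin_cases x <;> fin_cases y <;> fin_cases z <;> fin_cases a <;> simp_all


lemma win5 (χ : Finset V → Fin 3) (e1 e2 e3 e4 e5 : Finset V)
    (h1 : e1.card = 3) (h2 : e2.card = 3) (h3 : e3.card = 3) (h4 : e4.card = 3) (h5 : e5.card = 3)
    (d12 : Disjoint e1 e2) (d13 : Disjoint e1 e3) (d14 : Disjoint e1 e4) (d15 : Disjoint e1 e5)
    (d23 : Disjoint e2 e3) (d24 : Disjoint e2 e4) (d25 : Disjoint e2 e5)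
    (d34 : Disjoint e3 e4) (d35 : Disjoint e3 e5) (d45 : Disjoint e4 e5)
    (c1 c2 : Fin 3)
    (g1 : χ e1 = c1 ∨ χ e1 = c2) (g2 : χ e2 = c1 ∨ χ e2 = c2) (g3 : χ e3 = c1 ∨ χ e3 = c2)
    (g4 : χ e4 = c1 ∨ χ e4 = c2) (g5 : χ e5 = c1 ∨ χ e5 = c2) : Win χ := by
  have n12 := triple_ne h1 d12
  have n13 := triple_ne h1 d13
  have n14 := triple_ne h1 d14
  have n15 := triple_ne h1 d15
  have n23 := triple_ne h2 d23
  have n24 := triple_ne h2 d24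
  have n25 := triple_ne h2 d25
  have n34 := triple_ne h3 d34
  have n35 := triple_ne h3 d35
  have n45 := triple_ne h4 d45
  refine ⟨{e1, e2, e3, e4, e5}, ?_, ?_, ?_, c1, c2, ?_⟩
  · rw [Finset.card_insert_of_notMem (by simp [n12, n13, n14, n15]),
      Finset.card_insert_of_notMem (by simp [n23, n24, n25]),
      Finset.card_insert_of_notMem (by simp [n34, n35]),
      Finset.card_insert_of_notMem (by simp [n45]), Finset.card_singleton]
  · intro e he
    simp only [Finset.mem_insert, Finset.mem_singleton] at he
    rcases he with rfl | rfl | rfl | rfl | rfl <;> assumption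
  · intro e he f hf hne
    simp only [Finset.mem_insert, Finset.mem_singleton] at he hf
    rcases he with rfl | rfl | rfl | rfl | rfl <;>
      rcases hf with rfl | rfl | rfl | rfl | rfl <;>
      first
        | exact absurd rfl hne
        | assumption
        | exact Disjoint.symm (by assumption)
  · intro e he
    simp only [Finset.mem_insert, Finset.mem_singleton] at he
    rcases he with rfl | rfl | rfl | rfl | rfl <;> assumption


lemma F5 (χ : Finset V → Fin 3) (a b c : Finset V)
    (ha : a.card = 3) (hb : b.card = 3) (hc : c.card = 3)
    (dab : Disjoint a b) (dac : Disjoint a c) (dbc : Disjoint b c)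
    (eab : χ a = χ b) (eac : χ a = χ c) : Win χ := by
  set R := (Finset.univ : Finset V) \ (a ∪ b ∪ c) with hR
  have hdR : Disjoint R (a ∪ b ∪ c) := Finset.sdiff_disjoint
  have hRab := Finset.disjoint_union_right.mp hdR
  have hRa' := Finset.disjoint_union_right.mp hRab.1
  have dA : ∀ {s : Finset V}, s ⊆ R → Disjoint s a :=
    fun hs => Finset.disjoint_of_subset_left hs hRa'.1
  have dB : ∀ {s : Finset V}, s ⊆ R → Disjoint s b :=
    fun hs => Finset.disjoint_of_subset_left hs hRa'.2
  have dC : ∀ {s : Finset V}, s ⊆ R → Disjoint s c :=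
    fun hs => Finset.disjoint_of_subset_left hs hRab.2
  have hcu : (a ∪ b ∪ c).card = 9 := by
    rw [Finset.card_union_of_disjoint (Finset.disjoint_union_left.mpr ⟨dac, dbc⟩),
      Finset.card_union_of_disjoint dab, ha, hb, hc]
  have hRcard : R.card = 7 := by
    rw [hR, Finset.card_sdiff_of_subset (Finset.subset_univ _), hcu]
    simp
  obtain ⟨t4, ht4sub, ht4card⟩ : ∃ t ⊆ R, t.card = 3 :=
    Finset.exists_subset_card_eq (by omega)
  by_cases h4 : χ t4 = χ a
  · have hR2 : (R \ t4).card = 4 := by rw [Finset.card_sdiff_of_subset ht4sub, hRcard, ht4card]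
    obtain ⟨t5, ht5sub, ht5card⟩ : ∃ t ⊆ R \ t4, t.card = 3 :=
      Finset.exists_subset_card_eq (by omega)
    have ht5R : t5 ⊆ R := ht5sub.trans (Finset.sdiff_subset)
    have d45 : Disjoint t4 t5 :=
      (Finset.disjoint_of_subset_left ht5sub Finset.sdiff_disjoint).symm
    exact win5 χ a b c t4 t5 ha hb hc ht4card ht5card dab dac (dA ht4sub).symm
      (dA ht5R).symm dbc (dB ht4sub).symm (dB ht5R).symm (dC ht4sub).symm (dC ht5R).symm d45
      (χ a) (χ t5) (Or.inl rfl) (Or.inl eab.symm) (Or.inl eac.symm) (Or.inl h4) (Or.inr rfl)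
  · have hQcard : (R \ t4).card = 4 := by rw [Finset.card_sdiff_of_subset ht4sub, hRcard, ht4card]
    set Q := R \ t4 with hQdef
    have hQR : Q ⊆ R := Finset.sdiff_subset
    by_cases hq : ∃ u ⊆ Q, u.card = 3 ∧ (χ u = χ a ∨ χ u = χ t4)
    · obtain ⟨u, huQ, hucard, hucol⟩ := hq
      have huR : u ⊆ R := huQ.trans hQR
      have d4u : Disjoint t4 u :=
        (Finset.disjoint_of_subset_left huQ Finset.sdiff_disjoint).symm
      exact win5 χ a b c t4 u ha hb hc ht4card hucard dab dac (dA ht4sub).symm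
        (dA huR).symm dbc (dB ht4sub).symm (dB huR).symm (dC ht4sub).symm (dC huR).symm d4u
        (χ a) (χ t4) (Or.inl rfl) (Or.inl eab.symm) (Or.inl eac.symm) (Or.inr rfl) hucol
    · push_neg at hq
      obtain ⟨y1, y2, y3, hy12, hy13, hy23, ht4e⟩ := Finset.card_eq_three.mp ht4card
      obtain ⟨qa, qb, qc, qd, hab', hac', had', hbc', hbd', hcd', hQe⟩ := card4 hQcard
      have hy1t : y1 ∈ t4 := by rw [ht4e]; simp
      have hy2t : y2 ∈ t4 := by rw [ht4e]; simp
      have hy3t : y3 ∈ t4 := by rw [ht4e]; simp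
      have hy1R : y1 ∈ R := ht4sub hy1t
      have hy2R : y2 ∈ R := ht4sub hy2t
      have hy3R : y3 ∈ R := ht4sub hy3t
      have hqmem : ∀ q ∈ Q, q ∈ R ∧ q ∉ t4 := fun q hq' => Finset.mem_sdiff.mp hq'
      have hqaQ : qa ∈ Q := by rw [hQe]; simp
      have hqbQ : qb ∈ Q := by rw [hQe]; simp
      have hqcQ : qc ∈ Q := by rw [hQe]; simp
      have hqdQ : qd ∈ Q := by rw [hQe]; simp
      obtain ⟨hqaR, hqat⟩ := hqmem qa hqaQ
      obtain ⟨hqbR, hqbt⟩ := hqmem qb hqbQ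
      obtain ⟨hqcR, hqct⟩ := hqmem qc hqcQ
      obtain ⟨hqdR, hqdt⟩ := hqmem qd hqdQ
      have n1a : y1 ≠ qa := fun e => hqat (e ▸ hy1t)
      have n1b : y1 ≠ qb := fun e => hqbt (e ▸ hy1t)
      have n1c : y1 ≠ qc := fun e => hqct (e ▸ hy1t)
      have n1d : y1 ≠ qd := fun e => hqdt (e ▸ hy1t)
      have n2a : y2 ≠ qa := fun e => hqat (e ▸ hy2t)
      have n2b : y2 ≠ qb := fun e => hqbt (e ▸ hy2t)
      have n2c : y2 ≠ qc := fun e => hqct (e ▸ hy2t)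
      have n2d : y2 ≠ qd := fun e => hqdt (e ▸ hy2t)
      have n3a : y3 ≠ qa := fun e => hqat (e ▸ hy3t)
      have n3b : y3 ≠ qb := fun e => hqbt (e ▸ hy3t)
      have n3c : y3 ≠ qc := fun e => hqct (e ▸ hy3t)
      have n3d : y3 ≠ qd := fun e => hqdt (e ▸ hy3t)
      -- gamma facts for triples inside Q
      have hsubQ1 : ({qa, qb, qc} : Finset V) ⊆ Q := by
        rw [hQe]; intro x hx; simp at hx; rcases hx with rfl | rfl | rfl <;> simp
      have hsubQ2 : ({qa, qb, qd} : Finset V) ⊆ Q := by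
        rw [hQe]; intro x hx; simp at hx; rcases hx with rfl | rfl | rfl <;> simp
      have hsubQ3 : ({qb, qc, qd} : Finset V) ⊆ Q := by
        rw [hQe]; intro x hx; simp at hx; rcases hx with rfl | rfl | rfl <;> simp
      have hg1 := hq _ hsubQ1 (card3 hab' hac' hbc')
      have hg2 := hq _ hsubQ2 (card3 hab' had' hbd')
      have hg3 := hq _ hsubQ3 (card3 hbc' hbd' hcd')
      set γ := χ ({qa, qb, qc} : Finset V) with hγdef
      have hβα : χ t4 ≠ χ a := h4
      have hγa : γ ≠ χ a := hg1.1
      have hγb : γ ≠ χ t4 := hg1.2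
      have hg2' : χ ({qa, qb, qd} : Finset V) = γ :=
        fin3_third (p := χ a) (s := χ t4) (fun e => hβα e.symm) hγa hγb hg2.1 hg2.2
      have hg3' : χ ({qb, qc, qd} : Finset V) = γ :=
        fin3_third (p := χ a) (s := χ t4) (fun e => hβα e.symm) hγa hγb hg3.1 hg3.2
      -- helper to build subsets of R
      have hins : ∀ {u v w : V}, u ∈ R → v ∈ R → w ∈ R → ({u, v, w} : Finset V) ⊆ R := by
        intro u v w hu hv hw x hx
        simp at hx; rcases hx with rfl | rfl | rfl <;> assumption
      set σ1 := ({y1, qa, qb} : Finset V) with hσ1def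
      set σ2 := ({y2, qc, qd} : Finset V) with hσ2def
      have hσ1R : σ1 ⊆ R := hins hy1R hqaR hqbR
      have hσ2R : σ2 ⊆ R := hins hy2R hqcR hqdR
      have hσ1card : σ1.card = 3 := card3 n1a n1b hab'
      have hσ2card : σ2.card = 3 := card3 n2c n2d hcd'
      have dσ12 : Disjoint σ1 σ2 := disj33 hy12 n1c n1d (Ne.symm n2a) hac' had' (Ne.symm n2b) hbc' hbd'
      by_cases hs1 : χ σ1 = χ a
      · exact win5 χ a b c σ1 σ2 ha hb hc hσ1card hσ2card dab dac (dA hσ1R).symm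
          (dA hσ2R).symm dbc (dB hσ1R).symm (dB hσ2R).symm (dC hσ1R).symm (dC hσ2R).symm dσ12
          (χ a) (χ σ2) (Or.inl rfl) (Or.inl eab.symm) (Or.inl eac.symm) (Or.inl hs1) (Or.inr rfl)
      by_cases hs2 : χ σ2 = χ a
      · exact win5 χ a b c σ2 σ1 ha hb hc hσ2card hσ1card dab dac (dA hσ2R).symm
          (dA hσ1R).symm dbc (dB hσ2R).symm (dB hσ1R).symm (dC hσ2R).symm (dC hσ1R).symm dσ12.symm
          (χ a) (χ σ1) (Or.inl rfl) (Or.inl eab.symm) (Or.inl eac.symm) (Or.inl hs2) (Or.inr rfl)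
      by_cases hss : χ σ1 = χ σ2
      · exact win5 χ a b c σ1 σ2 ha hb hc hσ1card hσ2card dab dac (dA hσ1R).symm
          (dA hσ2R).symm dbc (dB hσ1R).symm (dB hσ2R).symm (dC hσ1R).symm (dC hσ2R).symm dσ12
          (χ a) (χ σ2) (Or.inl rfl) (Or.inl eab.symm) (Or.inl eac.symm) (Or.inr hss) (Or.inr rfl)
      -- now χ σ1, χ σ2 ∈ {β, γ}, distinct
      by_cases hs1β : χ σ1 = χ t4
      · -- τ = {y2,y3,qc}
        set τ := ({y2, y3, qc} : Finset V) with hτdef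
        have hτR : τ ⊆ R := hins hy2R hy3R hqcR
        have hτcard : τ.card = 3 := card3 hy23 n2c n3c
        have dτσ1 : Disjoint τ σ1 := disj33 (Ne.symm hy12) n2a n2b (Ne.symm hy13) n3a n3b
          (fun e => n1c e.symm) (fun e => hac' e.symm) (fun e => hbc' e.symm)
        rcases fin3_cover (x := χ a) (y := χ t4) (z := γ) (a := χ τ)
            (fun e => hβα e.symm) hγa hγb with hτc | hτc | hτc
        · exact win5 χ a b c τ σ1 ha hb hc hτcard hσ1card dab dac (dA hτR).symm
            (dA hσ1R).symm dbc (dB hτR).symm (dB hσ1R).symm (dC hτR).symm (dC hσ1R).symm dτσ1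
            (χ a) (χ t4) (Or.inl rfl) (Or.inl eab.symm) (Or.inl eac.symm) (Or.inl hτc) (Or.inr hs1β)
        · exact win5 χ a b c σ1 τ ha hb hc hσ1card hτcard dab dac (dA hσ1R).symm
            (dA hτR).symm dbc (dB hσ1R).symm (dB hτR).symm (dC hσ1R).symm (dC hτR).symm dτσ1.symm
            (χ a) (χ t4) (Or.inl rfl) (Or.inl eab.symm) (Or.inl eac.symm) (Or.inr hs1β) (Or.inr hτc)
        · set ρ := ({qa, qb, qd} : Finset V) with hρdef
          have hρR : ρ ⊆ R := hins hqaR hqbR hqdR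
          have hρcard : ρ.card = 3 := card3 hab' had' hbd'
          have dτρ : Disjoint τ ρ := disj33 n2a n2b n2d n3a n3b n3d
            (fun e => hac' e.symm) (fun e => hbc' e.symm) hcd'
          exact win5 χ a b c τ ρ ha hb hc hτcard hρcard dab dac (dA hτR).symm
            (dA hρR).symm dbc (dB hτR).symm (dB hρR).symm (dC hτR).symm (dC hρR).symm dτρ
            (χ a) γ (Or.inl rfl) (Or.inl eab.symm) (Or.inl eac.symm) (Or.inr hτc) (Or.inr hg2')
      by_cases hs2β : χ σ2 = χ t4
      · set τ := ({y1, y3, qa} : Finset V) with hτdef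
        have hτR : τ ⊆ R := hins hy1R hy3R hqaR
        have hτcard : τ.card = 3 := card3 hy13 n1a n3a
        have dτσ2 : Disjoint τ σ2 := disj33 hy12 n1c n1d (Ne.symm hy23) n3c n3d
          (fun e => n2a e.symm) hac' had'
        rcases fin3_cover (x := χ a) (y := χ t4) (z := γ) (a := χ τ)
            (fun e => hβα e.symm) hγa hγb with hτc | hτc | hτc
        · exact win5 χ a b c τ σ2 ha hb hc hτcard hσ2card dab dac (dA hτR).symm
            (dA hσ2R).symm dbc (dB hτR).symm (dB hσ2R).symm (dC hτR).symm (dC hσ2R).symm dτσ2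
            (χ a) (χ t4) (Or.inl rfl) (Or.inl eab.symm) (Or.inl eac.symm) (Or.inl hτc) (Or.inr hs2β)
        · exact win5 χ a b c σ2 τ ha hb hc hσ2card hτcard dab dac (dA hσ2R).symm
            (dA hτR).symm dbc (dB hσ2R).symm (dB hτR).symm (dC hσ2R).symm (dC hτR).symm dτσ2.symm
            (χ a) (χ t4) (Or.inl rfl) (Or.inl eab.symm) (Or.inl eac.symm) (Or.inr hs2β) (Or.inr hτc)
        · set ρ := ({qb, qc, qd} : Finset V) with hρdef
          have hρR : ρ ⊆ R := hins hqbR hqcR hqdR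
          have hρcard : ρ.card = 3 := card3 hbc' hbd' hcd'
          have dτρ : Disjoint τ ρ := disj33 n1b n1c n1d n3b n3c n3d
            hab' hac' had'
          exact win5 χ a b c τ ρ ha hb hc hτcard hρcard dab dac (dA hτR).symm
            (dA hρR).symm dbc (dB hτR).symm (dB hρR).symm (dC hτR).symm (dC hρR).symm dτρ
            (χ a) γ (Or.inl rfl) (Or.inl eab.symm) (Or.inl eac.symm) (Or.inr hτc) (Or.inr hg3')
      · exfalso
        have h1 : χ σ1 = γ := fin3_third (p := χ a) (s := χ t4)
          (fun e => hβα e.symm) hγa hγb hs1 hs1β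
        have h2 : χ σ2 = γ := fin3_third (p := χ a) (s := χ t4)
          (fun e => hβα e.symm) hγa hγb hs2 hs2β
        exact hss (h1.trans h2.symm)


lemma card4' {a b c d : V} (h1 : a ≠ b) (h2 : a ≠ c) (h3 : a ≠ d) (h4 : b ≠ c) (h5 : b ≠ d)
    (h6 : c ≠ d) : ({a, b, c, d} : Finset V).card = 4 := by
  rw [Finset.card_insert_of_notMem (by simp [h1, h2, h3]),
    Finset.card_insert_of_notMem (by simp [h4, h5]),
    Finset.card_insert_of_notMem (by simp [h6]), Finset.card_singleton]

lemma H3 (χ : Finset V → Fin 3) (hNo : ¬Win χ) {a b c : Finset V}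
    (ha : a.card = 3) (hb : b.card = 3) (hc : c.card = 3)
    (dab : Disjoint a b) (dac : Disjoint a c) (dbc : Disjoint b c)
    (eab : χ a = χ b) (eac : χ a = χ c) : False :=
  hNo (F5 χ a b c ha hb hc dab dac dbc eab eac)

lemma REG (χ : Finset V → Fin 3) (hNo : ¬Win χ)
    (T P1 P2 S Qs : Finset V) (t1 t2 t3 q1 q2 q3 q4 : V)
    (hTe : T = {t1, t2, t3}) (ht12 : t1 ≠ t2) (ht13 : t1 ≠ t3) (ht23 : t2 ≠ t3)
    (hQe : Qs = {q1, q2, q3, q4})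
    (hq12 : q1 ≠ q2) (hq13 : q1 ≠ q3) (hq14 : q1 ≠ q4)
    (hq23 : q2 ≠ q3) (hq24 : q2 ≠ q4) (hq34 : q3 ≠ q4)
    (hTQ : Disjoint T Qs)
    (hP1card : P1.card = 3) (hP2card : P2.card = 3) (hScard : S.card = 3)
    (dP12 : Disjoint P1 P2) (dP1S : Disjoint P1 S) (dP2S : Disjoint P2 S)
    (dUP1 : Disjoint (T ∪ Qs) P1) (dUP2 : Disjoint (T ∪ Qs) P2) (dUS : Disjoint (T ∪ Qs) S)
    (z p s : Fin 3) (hps : p ≠ s) (hzp : z ≠ p) (hzs : z ≠ s)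
    (hχP1 : χ P1 = p) (hχP2 : χ P2 = p) (hχS : χ S = s)
    (hQclique : ∀ u ⊆ Qs, u.card = 3 → χ u = z) :
    ∃ ζ1 ζ2 : Finset V, ζ1.card = 3 ∧ ζ2.card = 3 ∧ Disjoint ζ1 ζ2 ∧
      ζ1 ⊆ T ∪ Qs ∧ ζ2 ⊆ T ∪ Qs ∧ χ ζ1 = z ∧ χ ζ2 = z := by
  have hQcard : Qs.card = 4 := by rw [hQe]; exact card4' hq12 hq13 hq14 hq23 hq24 hq34
  by_cases hAex : ∃ m ⊆ T ∪ Qs, m.card = 3 ∧ χ m = z ∧ (m ∩ Qs).card ≤ 1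
  · obtain ⟨mm, hmmU, hmmcard, hmmz, hmmQ⟩ := hAex
    have hkey : (Qs \ mm).card + (Qs ∩ mm).card = Qs.card := Finset.card_sdiff_add_card_inter Qs mm
    have hIC : (Qs ∩ mm).card ≤ 1 := by rw [Finset.inter_comm]; exact hmmQ
    have h3le : 3 ≤ (Qs \ mm).card := by omega
    obtain ⟨ζ2, hζ2sub, hζ2card⟩ := Finset.exists_subset_card_eq h3le
    have hζ2Q : ζ2 ⊆ Qs := hζ2sub.trans (Finset.sdiff_subset)
    refine ⟨mm, ζ2, hmmcard, hζ2card, ?_, hmmU, hζ2Q.trans (Finset.subset_union_right), hmmz,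
      hQclique ζ2 hζ2Q hζ2card⟩
    exact (Finset.disjoint_of_subset_left hζ2sub Finset.sdiff_disjoint).symm
  · push_neg at hAex
    have ht1T : t1 ∈ T := by rw [hTe]; simp
    have ht2T : t2 ∈ T := by rw [hTe]; simp
    have ht3T : t3 ∈ T := by rw [hTe]; simp
    have hq1Q : q1 ∈ Qs := by rw [hQe]; simp
    have hq2Q : q2 ∈ Qs := by rw [hQe]; simp
    have hq3Q : q3 ∈ Qs := by rw [hQe]; simp
    have hq4Q : q4 ∈ Qs := by rw [hQe]; simp
    have ntq : ∀ {t q : V}, t ∈ T → q ∈ Qs → t ≠ q := fun ht hq => ne_of_mem_disj hTQ ht hq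
    have n11 := ntq ht1T hq1Q
    have n12 := ntq ht1T hq2Q
    have n13 := ntq ht1T hq3Q
    have n14 := ntq ht1T hq4Q
    have n21 := ntq ht2T hq1Q
    have n22 := ntq ht2T hq2Q
    have n23 := ntq ht2T hq3Q
    have n24 := ntq ht2T hq4Q
    have n31 := ntq ht3T hq1Q
    have n32 := ntq ht3T hq2Q
    have n33 := ntq ht3T hq3Q
    have n34 := ntq ht3T hq4Q
    have hsubU : ∀ {u v w : V}, u ∈ T ∪ Qs → v ∈ T ∪ Qs → w ∈ T ∪ Qs →
        ({u, v, w} : Finset V) ⊆ T ∪ Qs := by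
      intro u v w hu hv hw x hx
      simp at hx; rcases hx with rfl | rfl | rfl <;> assumption
    have memT : ∀ {t : V}, t ∈ T → t ∈ T ∪ Qs := fun h => Finset.mem_union_left _ h
    have memQ : ∀ {q : V}, q ∈ Qs → q ∈ T ∪ Qs := fun h => Finset.mem_union_right _ h
    -- generic: mu = {ta,tb,qc} has χ = s
    have hmu : ∀ {ta tb qc : V}, ta ∈ T → tb ∈ T → qc ∈ Qs → ta ≠ tb → ta ≠ qc → tb ≠ qc →
        χ {ta, tb, qc} = s := by
      intro ta tb qc hta htb hqc hab hac hbc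
      have hcard : ({ta, tb, qc} : Finset V).card = 3 := card3 hab hac hbc
      have hsub : ({ta, tb, qc} : Finset V) ⊆ T ∪ Qs := hsubU (memT hta) (memT htb) (memQ hqc)
      have hint : (({ta, tb, qc} : Finset V) ∩ Qs).card ≤ 1 := by
        have hss : ({ta, tb, qc} : Finset V) ∩ Qs ⊆ {qc} := by
          intro x hx
          obtain ⟨hx1, hx2⟩ := Finset.mem_inter.mp hx
          simp only [Finset.mem_insert, Finset.mem_singleton] at hx1 ⊢
          rcases hx1 with rfl | rfl | rfl
          · exact absurd hx2 (Finset.disjoint_left.mp hTQ hta)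
          · exact absurd hx2 (Finset.disjoint_left.mp hTQ htb)
          · rfl
        calc (({ta, tb, qc} : Finset V) ∩ Qs).card ≤ ({qc} : Finset V).card :=
              Finset.card_le_card hss
          _ = 1 := Finset.card_singleton _
      have hnz : χ {ta, tb, qc} ≠ z := by
        intro hz
        have := hAex _ hsub hcard hz
        omega
      have hnp : χ {ta, tb, qc} ≠ p := by
        intro hp
        exact H3 χ hNo hcard hP1card hP2card
          (Finset.disjoint_of_subset_left hsub dUP1)
          (Finset.disjoint_of_subset_left hsub dUP2) dP12
          (hp.trans hχP1.symm) (hp.trans hχP2.symm)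
      exact fin3_third (p := p) (s := z) (z := s) hzp.symm hps.symm hzs.symm hnp hnz
    -- generic: nu = {ta, qa, qb} has χ = z, given a disjoint mu
    have hnu : ∀ {ta tb tc qa qb qc : V}, ta ∈ T → tb ∈ T → tc ∈ T →
        qa ∈ Qs → qb ∈ Qs → qc ∈ Qs →
        ta ≠ tb → ta ≠ tc → tb ≠ tc → qa ≠ qb → qa ≠ qc → qb ≠ qc →
        χ {ta, qa, qb} = z := by
      intro ta tb tc qa qb qc hta htb htc hqa hqb hqc htab htac htbc hqab hqac hqbc
      have hmms : χ {tb, tc, qc} = s := hmu htb htc hqc htbc (ntq htb hqc) (ntq htc hqc)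
      have hνcard : ({ta, qa, qb} : Finset V).card = 3 := card3 (ntq hta hqa) (ntq hta hqb) hqab
      have hmmcard : ({tb, tc, qc} : Finset V).card = 3 := card3 htbc (ntq htb hqc) (ntq htc hqc)
      have hνsub : ({ta, qa, qb} : Finset V) ⊆ T ∪ Qs := hsubU (memT hta) (memQ hqa) (memQ hqb)
      have hmmsub : ({tb, tc, qc} : Finset V) ⊆ T ∪ Qs := hsubU (memT htb) (memT htc) (memQ hqc)
      have dνmm : Disjoint ({ta, qa, qb} : Finset V) {tb, tc, qc} :=
        disj33 htab htac (ntq hta hqc) (fun e => (ntq htb hqa) e.symm)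
          (fun e => (ntq htc hqa) e.symm) hqac (fun e => (ntq htb hqb) e.symm)
          (fun e => (ntq htc hqb) e.symm) hqbc
      by_cases hνp : χ {ta, qa, qb} = p
      · exfalso
        apply hNo
        exact win5 χ ({ta, qa, qb} : Finset V) P1 P2 ({tb, tc, qc} : Finset V) S
          hνcard hP1card hP2card hmmcard hScard
          (Finset.disjoint_of_subset_left hνsub dUP1)
          (Finset.disjoint_of_subset_left hνsub dUP2) dνmm
          (Finset.disjoint_of_subset_left hνsub dUS) dP12
          (Finset.disjoint_of_subset_left hmmsub dUP1).symm dP1S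
          (Finset.disjoint_of_subset_left hmmsub dUP2).symm dP2S
          (Finset.disjoint_of_subset_left hmmsub dUS)
          p s (Or.inl hνp) (Or.inl hχP1) (Or.inl hχP2) (Or.inr hmms) (Or.inr hχS)
      by_cases hνs : χ {ta, qa, qb} = s
      · exfalso
        apply hNo
        exact win5 χ ({ta, qa, qb} : Finset V) P1 P2 ({tb, tc, qc} : Finset V) S
          hνcard hP1card hP2card hmmcard hScard
          (Finset.disjoint_of_subset_left hνsub dUP1)
          (Finset.disjoint_of_subset_left hνsub dUP2) dνmm
          (Finset.disjoint_of_subset_left hνsub dUS) dP12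
          (Finset.disjoint_of_subset_left hmmsub dUP1).symm dP1S
          (Finset.disjoint_of_subset_left hmmsub dUP2).symm dP2S
          (Finset.disjoint_of_subset_left hmmsub dUS)
          p s (Or.inr hνs) (Or.inl hχP1) (Or.inl hχP2) (Or.inr hmms) (Or.inr hχS)
      · exact fin3_third hps hzp hzs hνp hνs
    have hν1 : χ {t1, q1, q2} = z := hnu ht1T ht2T ht3T hq1Q hq2Q hq3Q ht12 ht13 ht23 hq12 hq13 hq23
    have hν2 : χ {t2, q3, q4} = z := hnu ht2T ht1T ht3T hq3Q hq4Q hq1Q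
      (Ne.symm ht12) ht23 ht13 hq34 (Ne.symm hq13) (Ne.symm hq14)
    refine ⟨{t1, q1, q2}, {t2, q3, q4},
      card3 n11 n12 hq12, card3 n23 n24 hq34, ?_, ?_, ?_, hν1, hν2⟩
    · exact disj33 ht12 n13 n14 (fun e => n21 e.symm) hq13 hq14 (fun e => n22 e.symm) hq23 hq24
    · exact hsubU (memT ht1T) (memQ hq1Q) (memQ hq2Q)
    · exact hsubU (memT ht2T) (memQ hq3Q) (memQ hq4Q)


set_option maxRecDepth 100000 in
set_option maxHeartbeats 4000000 in
lemma L5 : ∀ f : Fin 5 → Fin 3,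
    (¬∃ c1 c2 : Fin 3, ∀ i, f i = c1 ∨ f i = c2) →
    (¬∃ i j k : Fin 5, i ≠ j ∧ i ≠ k ∧ j ≠ k ∧ f i = f j ∧ f i = f k) →
    ∃ i1 i2 i3 i4 i5 : Fin 5, i1 ≠ i2 ∧ i3 ≠ i4 ∧
      f i1 = f i2 ∧ f i3 = f i4 ∧ f i1 ≠ f i3 ∧ f i5 ≠ f i1 ∧ f i5 ≠ f i3 := by decide

def Es : Fin 5 → Finset V := ![{0, 1, 2}, {3, 4, 5}, {6, 7, 8}, {9, 10, 11}, {12, 13, 14}]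

lemma hEcard : ∀ i, (Es i).card = 3 := by decide

lemma hEdisj' : ∀ i j, i ≠ j → ∀ a ∈ Es i, a ∉ Es j := by decide

lemma hEdisj : ∀ i j, i ≠ j → Disjoint (Es i) (Es j) :=
  fun i j h => Finset.disjoint_left.mpr (hEdisj' i j h)

lemma h15 : ∀ i, (15 : V) ∉ Es i := by decide


set_option maxHeartbeats 1000000 in
theorem main (χ : Finset V → Fin 3) : Win χ := by
  by_contra hNo
  have hcov : ¬∃ c1 c2 : Fin 3, ∀ i : Fin 5, χ (Es i) = c1 ∨ χ (Es i) = c2 := by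
    rintro ⟨c1, c2, hc⟩
    exact hNo (win5 χ (Es 0) (Es 1) (Es 2) (Es 3) (Es 4)
      (hEcard 0) (hEcard 1) (hEcard 2) (hEcard 3) (hEcard 4)
      (hEdisj 0 1 (by decide)) (hEdisj 0 2 (by decide)) (hEdisj 0 3 (by decide))
      (hEdisj 0 4 (by decide)) (hEdisj 1 2 (by decide)) (hEdisj 1 3 (by decide))
      (hEdisj 1 4 (by decide)) (hEdisj 2 3 (by decide)) (hEdisj 2 4 (by decide))
      (hEdisj 3 4 (by decide)) c1 c2 (hc 0) (hc 1) (hc 2) (hc 3) (hc 4))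
  have hmono : ¬∃ i j k : Fin 5, i ≠ j ∧ i ≠ k ∧ j ≠ k ∧
      χ (Es i) = χ (Es j) ∧ χ (Es i) = χ (Es k) := by
    rintro ⟨i, j, k, hij, hik, hjk, e1, e2⟩
    exact H3 χ hNo (hEcard i) (hEcard j) (hEcard k) (hEdisj i j hij) (hEdisj i k hik)
      (hEdisj j k hjk) e1 e2
  obtain ⟨i1, i2, i3, i4, i5, n12, n34, e12, e34, nxy, nz1, nz3⟩ :=
    L5 (fun i => χ (Es i)) hcov hmono
  have e12 : χ (Es i1) = χ (Es i2) := e12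
  have e34 : χ (Es i3) = χ (Es i4) := e34
  have nxy : χ (Es i1) ≠ χ (Es i3) := nxy
  have nz1 : χ (Es i5) ≠ χ (Es i1) := nz1
  have nz3 : χ (Es i5) ≠ χ (Es i3) := nz3
  have n13 : i1 ≠ i3 := fun e => nxy (by rw [e])
  have n14 : i1 ≠ i4 := fun e => nxy (by rw [e]; exact e34.symm)
  have n23 : i2 ≠ i3 := fun e => nxy (by rw [e12, e])
  have n24 : i2 ≠ i4 := fun e => nxy (by rw [e12, e]; exact e34.symm)
  have n15 : i1 ≠ i5 := fun e => nz1 (by rw [e])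
  have n25 : i2 ≠ i5 := fun e => nz1 (by rw [← e]; exact e12.symm)
  have n35 : i3 ≠ i5 := fun e => nz3 (by rw [e])
  have n45 : i4 ≠ i5 := fun e => nz3 (by rw [← e]; exact e34.symm)
  -- destructure the five triples
  obtain ⟨x1, x2, x3, hx12, hx13, hx23, hT1e⟩ := Finset.card_eq_three.mp (hEcard i1)
  obtain ⟨x4, x5, x6, hx45, hx46, hx56, hT2e⟩ := Finset.card_eq_three.mp (hEcard i2)
  obtain ⟨y1, y2, y3, hy12, hy13, hy23, hT3e⟩ := Finset.card_eq_three.mp (hEcard i3)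
  obtain ⟨y4, y5, y6, hy45, hy46, hy56, hT4e⟩ := Finset.card_eq_three.mp (hEcard i4)
  obtain ⟨q1, q2, q3, hq12, hq13, hq23, hT5e⟩ := Finset.card_eq_three.mp (hEcard i5)
  have mq1 : q1 ∈ Es i5 := by rw [hT5e]; simp
  have mq2 : q2 ∈ Es i5 := by rw [hT5e]; simp
  have mq3 : q3 ∈ Es i5 := by rw [hT5e]; simp
  have hq1F : q1 ≠ (15 : V) := fun e => h15 i5 (e ▸ mq1)
  have hq2F : q2 ≠ (15 : V) := fun e => h15 i5 (e ▸ mq2)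
  have hq3F : q3 ≠ (15 : V) := fun e => h15 i5 (e ▸ mq3)
  set Qs : Finset V := {q1, q2, q3, (15 : V)} with hQs
  have dTQ : ∀ j, j ≠ i5 → Disjoint (Es j) Qs := by
    intro j hj
    rw [Finset.disjoint_right]
    intro a ha
    have ha' : a = q1 ∨ a = q2 ∨ a = q3 ∨ a = (15 : V) := by simpa [hQs] using ha
    rcases ha' with rfl | rfl | rfl | rfl
    · exact hEdisj' i5 j (Ne.symm hj) a mq1
    · exact hEdisj' i5 j (Ne.symm hj) a mq2
    · exact hEdisj' i5 j (Ne.symm hj) a mq3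
    · exact h15 j
  have hQclique : ∀ u ⊆ Qs, u.card = 3 → χ u = χ (Es i5) := by
    intro u hu hucard
    have hdu : ∀ j, j ≠ i5 → Disjoint (Es j) u :=
      fun j hj => Finset.disjoint_of_subset_right hu (dTQ j hj)
    rcases fin3_cover (x := χ (Es i1)) (y := χ (Es i3)) (z := χ (Es i5)) (a := χ u)
        nxy nz1 nz3 with h | h | h
    · exact absurd (win5 χ (Es i1) (Es i2) (Es i3) (Es i4) u
        (hEcard i1) (hEcard i2) (hEcard i3) (hEcard i4) hucard
        (hEdisj i1 i2 n12) (hEdisj i1 i3 n13) (hEdisj i1 i4 n14) (hdu i1 n15)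
        (hEdisj i2 i3 n23) (hEdisj i2 i4 n24) (hdu i2 n25)
        (hEdisj i3 i4 n34) (hdu i3 n35) (hdu i4 n45)
        (χ (Es i1)) (χ (Es i3)) (Or.inl rfl) (Or.inl e12.symm) (Or.inr rfl)
        (Or.inr e34.symm) (Or.inl h)) hNo
    · exact absurd (win5 χ (Es i1) (Es i2) (Es i3) (Es i4) u
        (hEcard i1) (hEcard i2) (hEcard i3) (hEcard i4) hucard
        (hEdisj i1 i2 n12) (hEdisj i1 i3 n13) (hEdisj i1 i4 n14) (hdu i1 n15)
        (hEdisj i2 i3 n23) (hEdisj i2 i4 n24) (hdu i2 n25)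
        (hEdisj i3 i4 n34) (hdu i3 n35) (hdu i4 n45)
        (χ (Es i1)) (χ (Es i3)) (Or.inl rfl) (Or.inl e12.symm) (Or.inr rfl)
        (Or.inr e34.symm) (Or.inr h)) hNo
    · exact h
  -- the four z-pairs from regions
  obtain ⟨za1, za2, hza1c, hza2c, hzad, hza1s, hza2s, hza1z, hza2z⟩ :=
    REG χ hNo (Es i1) (Es i3) (Es i4) (Es i2) Qs x1 x2 x3 q1 q2 q3 (15 : V)
      hT1e hx12 hx13 hx23 hQs hq12 hq13 hq1F hq23 hq2F hq3F
      (dTQ i1 n15) (hEcard i3) (hEcard i4) (hEcard i2)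
      (hEdisj i3 i4 n34) (hEdisj i3 i2 (Ne.symm n23)) (hEdisj i4 i2 (Ne.symm n24))
      (Finset.disjoint_union_left.mpr ⟨hEdisj i1 i3 n13, (dTQ i3 n35).symm⟩)
      (Finset.disjoint_union_left.mpr ⟨hEdisj i1 i4 n14, (dTQ i4 n45).symm⟩)
      (Finset.disjoint_union_left.mpr ⟨hEdisj i1 i2 n12, (dTQ i2 n25).symm⟩)
      (χ (Es i5)) (χ (Es i3)) (χ (Es i1)) (Ne.symm nxy) nz3 nz1
      rfl e34.symm e12.symm hQclique
  obtain ⟨zb1, zb2, hzb1c, hzb2c, hzbd, hzb1s, hzb2s, hzb1z, hzb2z⟩ :=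
    REG χ hNo (Es i2) (Es i3) (Es i4) (Es i1) Qs x4 x5 x6 q1 q2 q3 (15 : V)
      hT2e hx45 hx46 hx56 hQs hq12 hq13 hq1F hq23 hq2F hq3F
      (dTQ i2 n25) (hEcard i3) (hEcard i4) (hEcard i1)
      (hEdisj i3 i4 n34) (hEdisj i3 i1 (Ne.symm n13)) (hEdisj i4 i1 (Ne.symm n14))
      (Finset.disjoint_union_left.mpr ⟨hEdisj i2 i3 n23, (dTQ i3 n35).symm⟩)
      (Finset.disjoint_union_left.mpr ⟨hEdisj i2 i4 n24, (dTQ i4 n45).symm⟩)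
      (Finset.disjoint_union_left.mpr ⟨hEdisj i2 i1 (Ne.symm n12), (dTQ i1 n15).symm⟩)
      (χ (Es i5)) (χ (Es i3)) (χ (Es i1)) (Ne.symm nxy) nz3 nz1
      rfl e34.symm rfl hQclique
  obtain ⟨zc1, zc2, hzc1c, hzc2c, hzcd, hzc1s, hzc2s, hzc1z, hzc2z⟩ :=
    REG χ hNo (Es i3) (Es i1) (Es i2) (Es i4) Qs y1 y2 y3 q1 q2 q3 (15 : V)
      hT3e hy12 hy13 hy23 hQs hq12 hq13 hq1F hq23 hq2F hq3F
      (dTQ i3 n35) (hEcard i1) (hEcard i2) (hEcard i4)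
      (hEdisj i1 i2 n12) (hEdisj i1 i4 n14) (hEdisj i2 i4 n24)
      (Finset.disjoint_union_left.mpr ⟨hEdisj i3 i1 (Ne.symm n13), (dTQ i1 n15).symm⟩)
      (Finset.disjoint_union_left.mpr ⟨hEdisj i3 i2 (Ne.symm n23), (dTQ i2 n25).symm⟩)
      (Finset.disjoint_union_left.mpr ⟨hEdisj i3 i4 n34, (dTQ i4 n45).symm⟩)
      (χ (Es i5)) (χ (Es i1)) (χ (Es i3)) nxy nz1 nz3
      rfl e12.symm e34.symm hQclique
  obtain ⟨zd1, zd2, hzd1c, hzd2c, hzdd, hzd1s, hzd2s, hzd1z, hzd2z⟩ :=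
    REG χ hNo (Es i4) (Es i1) (Es i2) (Es i3) Qs y4 y5 y6 q1 q2 q3 (15 : V)
      hT4e hy45 hy46 hy56 hQs hq12 hq13 hq1F hq23 hq2F hq3F
      (dTQ i4 n45) (hEcard i1) (hEcard i2) (hEcard i3)
      (hEdisj i1 i2 n12) (hEdisj i1 i3 n13) (hEdisj i2 i3 n23)
      (Finset.disjoint_union_left.mpr ⟨hEdisj i4 i1 (Ne.symm n14), (dTQ i1 n15).symm⟩)
      (Finset.disjoint_union_left.mpr ⟨hEdisj i4 i2 (Ne.symm n24), (dTQ i2 n25).symm⟩)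
      (Finset.disjoint_union_left.mpr ⟨hEdisj i4 i3 (Ne.symm n34), (dTQ i3 n35).symm⟩)
      (χ (Es i5)) (χ (Es i1)) (χ (Es i3)) nxy nz1 nz3
      rfl e12.symm rfl hQclique
  have mx1 : x1 ∈ Es i1 := by rw [hT1e]; simp
  have mx2 : x2 ∈ Es i1 := by rw [hT1e]; simp
  have mx3 : x3 ∈ Es i1 := by rw [hT1e]; simp
  have mx4 : x4 ∈ Es i2 := by rw [hT2e]; simp
  have mx5 : x5 ∈ Es i2 := by rw [hT2e]; simp
  have mx6 : x6 ∈ Es i2 := by rw [hT2e]; simp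
  have my1 : y1 ∈ Es i3 := by rw [hT3e]; simp
  have my2 : y2 ∈ Es i3 := by rw [hT3e]; simp
  have my3 : y3 ∈ Es i3 := by rw [hT3e]; simp
  have my4 : y4 ∈ Es i4 := by rw [hT4e]; simp
  have my5 : y5 ∈ Es i4 := by rw [hT4e]; simp
  have my6 : y6 ∈ Es i4 := by rw [hT4e]; simp
  have nx12 : x1 ≠ x2 := hx12
  have nx13 : x1 ≠ x3 := hx13
  have nx14 : x1 ≠ x4 := ne_of_mem_disj (hEdisj i1 i2 n12) mx1 mx4
  have nx15 : x1 ≠ x5 := ne_of_mem_disj (hEdisj i1 i2 n12) mx1 mx5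
  have nx16 : x1 ≠ x6 := ne_of_mem_disj (hEdisj i1 i2 n12) mx1 mx6
  have nx23 : x2 ≠ x3 := hx23
  have nx24 : x2 ≠ x4 := ne_of_mem_disj (hEdisj i1 i2 n12) mx2 mx4
  have nx25 : x2 ≠ x5 := ne_of_mem_disj (hEdisj i1 i2 n12) mx2 mx5
  have nx26 : x2 ≠ x6 := ne_of_mem_disj (hEdisj i1 i2 n12) mx2 mx6
  have nx34 : x3 ≠ x4 := ne_of_mem_disj (hEdisj i1 i2 n12) mx3 mx4
  have nx35 : x3 ≠ x5 := ne_of_mem_disj (hEdisj i1 i2 n12) mx3 mx5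
  have nx36 : x3 ≠ x6 := ne_of_mem_disj (hEdisj i1 i2 n12) mx3 mx6
  have nx45 : x4 ≠ x5 := hx45
  have nx46 : x4 ≠ x6 := hx46
  have nx56 : x5 ≠ x6 := hx56
  have ny12 : y1 ≠ y2 := hy12
  have ny13 : y1 ≠ y3 := hy13
  have ny14 : y1 ≠ y4 := ne_of_mem_disj (hEdisj i3 i4 n34) my1 my4
  have ny15 : y1 ≠ y5 := ne_of_mem_disj (hEdisj i3 i4 n34) my1 my5
  have ny16 : y1 ≠ y6 := ne_of_mem_disj (hEdisj i3 i4 n34) my1 my6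
  have ny23 : y2 ≠ y3 := hy23
  have ny24 : y2 ≠ y4 := ne_of_mem_disj (hEdisj i3 i4 n34) my2 my4
  have ny25 : y2 ≠ y5 := ne_of_mem_disj (hEdisj i3 i4 n34) my2 my5
  have ny26 : y2 ≠ y6 := ne_of_mem_disj (hEdisj i3 i4 n34) my2 my6
  have ny34 : y3 ≠ y4 := ne_of_mem_disj (hEdisj i3 i4 n34) my3 my4
  have ny35 : y3 ≠ y5 := ne_of_mem_disj (hEdisj i3 i4 n34) my3 my5
  have ny36 : y3 ≠ y6 := ne_of_mem_disj (hEdisj i3 i4 n34) my3 my6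
  have ny45 : y4 ≠ y5 := hy45
  have ny46 : y4 ≠ y6 := hy46
  have ny56 : y5 ≠ y6 := hy56
  have nxy11 : x1 ≠ y1 := ne_of_mem_disj (hEdisj i1 i3 n13) mx1 my1
  have nxy12 : x1 ≠ y2 := ne_of_mem_disj (hEdisj i1 i3 n13) mx1 my2
  have nxy13 : x1 ≠ y3 := ne_of_mem_disj (hEdisj i1 i3 n13) mx1 my3
  have nxy14 : x1 ≠ y4 := ne_of_mem_disj (hEdisj i1 i4 n14) mx1 my4
  have nxy15 : x1 ≠ y5 := ne_of_mem_disj (hEdisj i1 i4 n14) mx1 my5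
  have nxy16 : x1 ≠ y6 := ne_of_mem_disj (hEdisj i1 i4 n14) mx1 my6
  have nxy21 : x2 ≠ y1 := ne_of_mem_disj (hEdisj i1 i3 n13) mx2 my1
  have nxy22 : x2 ≠ y2 := ne_of_mem_disj (hEdisj i1 i3 n13) mx2 my2
  have nxy23 : x2 ≠ y3 := ne_of_mem_disj (hEdisj i1 i3 n13) mx2 my3
  have nxy24 : x2 ≠ y4 := ne_of_mem_disj (hEdisj i1 i4 n14) mx2 my4
  have nxy25 : x2 ≠ y5 := ne_of_mem_disj (hEdisj i1 i4 n14) mx2 my5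
  have nxy26 : x2 ≠ y6 := ne_of_mem_disj (hEdisj i1 i4 n14) mx2 my6
  have nxy31 : x3 ≠ y1 := ne_of_mem_disj (hEdisj i1 i3 n13) mx3 my1
  have nxy32 : x3 ≠ y2 := ne_of_mem_disj (hEdisj i1 i3 n13) mx3 my2
  have nxy33 : x3 ≠ y3 := ne_of_mem_disj (hEdisj i1 i3 n13) mx3 my3
  have nxy34 : x3 ≠ y4 := ne_of_mem_disj (hEdisj i1 i4 n14) mx3 my4
  have nxy35 : x3 ≠ y5 := ne_of_mem_disj (hEdisj i1 i4 n14) mx3 my5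
  have nxy36 : x3 ≠ y6 := ne_of_mem_disj (hEdisj i1 i4 n14) mx3 my6
  have nxy41 : x4 ≠ y1 := ne_of_mem_disj (hEdisj i2 i3 n23) mx4 my1
  have nxy42 : x4 ≠ y2 := ne_of_mem_disj (hEdisj i2 i3 n23) mx4 my2
  have nxy43 : x4 ≠ y3 := ne_of_mem_disj (hEdisj i2 i3 n23) mx4 my3
  have nxy44 : x4 ≠ y4 := ne_of_mem_disj (hEdisj i2 i4 n24) mx4 my4
  have nxy45 : x4 ≠ y5 := ne_of_mem_disj (hEdisj i2 i4 n24) mx4 my5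
  have nxy46 : x4 ≠ y6 := ne_of_mem_disj (hEdisj i2 i4 n24) mx4 my6
  have nxy51 : x5 ≠ y1 := ne_of_mem_disj (hEdisj i2 i3 n23) mx5 my1
  have nxy52 : x5 ≠ y2 := ne_of_mem_disj (hEdisj i2 i3 n23) mx5 my2
  have nxy53 : x5 ≠ y3 := ne_of_mem_disj (hEdisj i2 i3 n23) mx5 my3
  have nxy54 : x5 ≠ y4 := ne_of_mem_disj (hEdisj i2 i4 n24) mx5 my4
  have nxy55 : x5 ≠ y5 := ne_of_mem_disj (hEdisj i2 i4 n24) mx5 my5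
  have nxy56 : x5 ≠ y6 := ne_of_mem_disj (hEdisj i2 i4 n24) mx5 my6
  have nxy61 : x6 ≠ y1 := ne_of_mem_disj (hEdisj i2 i3 n23) mx6 my1
  have nxy62 : x6 ≠ y2 := ne_of_mem_disj (hEdisj i2 i3 n23) mx6 my2
  have nxy63 : x6 ≠ y3 := ne_of_mem_disj (hEdisj i2 i3 n23) mx6 my3
  have nxy64 : x6 ≠ y4 := ne_of_mem_disj (hEdisj i2 i4 n24) mx6 my4
  have nxy65 : x6 ≠ y5 := ne_of_mem_disj (hEdisj i2 i4 n24) mx6 my5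
  have nxy66 : x6 ≠ y6 := ne_of_mem_disj (hEdisj i2 i4 n24) mx6 my6
  have dpt3 : ∀ {u v w : V} {B : Finset V}, u ∉ B → v ∉ B → w ∉ B →
      Disjoint ({u, v, w} : Finset V) B := by
    intro u v w B hu hv hw
    rw [Finset.disjoint_left]
    intro a ha
    simp only [Finset.mem_insert, Finset.mem_singleton] at ha
    rcases ha with rfl | rfl | rfl <;> assumption
  have notT : ∀ {p : V} {k j : Fin 5}, p ∈ Es k → k ≠ j → p ∉ Es j :=
    fun hp hkj => Finset.disjoint_left.mp (hEdisj _ _ hkj) hp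
  have notU : ∀ {p : V} {k j : Fin 5}, p ∈ Es k → k ≠ j → k ≠ i5 → p ∉ Es j ∪ Qs := by
    intro p k j hp hkj hk5 hmem
    rcases Finset.mem_union.mp hmem with h | h
    · exact notT hp hkj h
    · exact Finset.disjoint_left.mp (dTQ k hk5) hp h
  have hMix : ∀ (u v w : V) (w1 w2 : Finset V) (j : Fin 5),
      w1 ⊆ Es j ∪ Qs → w2 ⊆ Es j ∪ Qs → Disjoint w1 w2 → w1.card = 3 → w2.card = 3 →
      χ w1 = χ (Es i5) → χ w2 = χ (Es i5) →
      u ∉ Es j ∪ Qs → v ∉ Es j ∪ Qs → w ∉ Es j ∪ Qs →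
      u ≠ v → u ≠ w → v ≠ w → χ {u, v, w} ≠ χ (Es i5) := by
    intro u v w w1 w2 j hw1s hw2s hwd hw1c hw2c hw1z hw2z hu hv hw huv huw hvw h
    exact H3 χ hNo (card3 huv huw hvw) hw1c hw2c
      (Finset.disjoint_of_subset_right hw1s (dpt3 hu hv hw))
      (Finset.disjoint_of_subset_right hw2s (dpt3 hu hv hw)) hwd
      (h.trans hw1z.symm) (h.trans hw2z.symm)
  have hXcl : ∀ u v w : V, u ∈ Es i1 ∪ Es i2 → v ∈ Es i1 ∪ Es i2 → w ∈ Es i1 ∪ Es i2 →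
      u ≠ v → u ≠ w → v ≠ w → χ {u, v, w} = χ (Es i1) := by
    intro u v w hu hv hw huv huw hvw
    have key : ∀ {p : V}, p ∈ Es i1 ∪ Es i2 → (p ∉ Es i3 ∪ Qs) ∧ (p ∉ Es i4 ∪ Qs) := by
      intro p hp
      rcases Finset.mem_union.mp hp with h | h
      · exact ⟨notU h n13 n15, notU h n14 n15⟩
      · exact ⟨notU h n23 n25, notU h n24 n25⟩
    have hny : χ {u, v, w} ≠ χ (Es i3) := by
      intro h
      have d3 : Disjoint ({u, v, w} : Finset V) (Es i3) := dpt3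
        (fun hh => (key hu).1 (Finset.mem_union_left _ hh))
        (fun hh => (key hv).1 (Finset.mem_union_left _ hh))
        (fun hh => (key hw).1 (Finset.mem_union_left _ hh))
      have d4 : Disjoint ({u, v, w} : Finset V) (Es i4) := dpt3
        (fun hh => (key hu).2 (Finset.mem_union_left _ hh))
        (fun hh => (key hv).2 (Finset.mem_union_left _ hh))
        (fun hh => (key hw).2 (Finset.mem_union_left _ hh))
      exact H3 χ hNo (card3 huv huw hvw) (hEcard i3) (hEcard i4) d3 d4
        (hEdisj i3 i4 n34) h (h.trans e34)
    have hnz : χ {u, v, w} ≠ χ (Es i5) := hMix u v w zc1 zc2 i3 hzc1s hzc2s hzcd hzc1c hzc2c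
      hzc1z hzc2z (key hu).1 (key hv).1 (key hw).1 huv huw hvw
    exact fin3_third (p := χ (Es i3)) (s := χ (Es i5)) (z := χ (Es i1))
      (Ne.symm nz3) nxy (Ne.symm nz1) hny hnz
  have dich : ∀ (u v w : V), χ {u, v, w} ≠ χ (Es i5) →
      χ ({u, v, w} : Finset V) = χ (Es i1) ∨ χ ({u, v, w} : Finset V) = χ (Es i3) := by
    intro u v w h
    rcases fin3_cover (x := χ (Es i1)) (y := χ (Es i3)) (z := χ (Es i5))
      (a := χ ({u, v, w} : Finset V)) nxy nz1 nz3 with hh | hh | hh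
    exacts [Or.inl hh, Or.inr hh, absurd hh h]
  have mu1 : x1 ∈ Es i1 ∪ Es i2 := Finset.mem_union_left _ mx1
  have mu2 : x2 ∈ Es i1 ∪ Es i2 := Finset.mem_union_left _ mx2
  have mu3 : x3 ∈ Es i1 ∪ Es i2 := Finset.mem_union_left _ mx3
  have mu4 : x4 ∈ Es i1 ∪ Es i2 := Finset.mem_union_right _ mx4
  have mu5 : x5 ∈ Es i1 ∪ Es i2 := Finset.mem_union_right _ mx5
  have mu6 : x6 ∈ Es i1 ∪ Es i2 := Finset.mem_union_right _ mx6
  have hs1nz : χ ({x1, y1, y2} : Finset V) ≠ χ (Es i5) := hMix x1 y1 y2 zb1 zb2 i2 hzb1s hzb2s hzbd hzb1c hzb2c hzb1z hzb2z (notU mx1 n12 n15) (notU my1 (Ne.symm n23) n35) (notU my2 (Ne.symm n23) n35) nxy11 nxy12 ny12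
  have hs2nz : χ ({x2, y3, y4} : Finset V) ≠ χ (Es i5) := hMix x2 y3 y4 zb1 zb2 i2 hzb1s hzb2s hzbd hzb1c hzb2c hzb1z hzb2z (notU mx2 n12 n15) (notU my3 (Ne.symm n23) n35) (notU my4 (Ne.symm n24) n45) nxy23 nxy24 ny34
  have hs3nz : χ ({x3, y5, y6} : Finset V) ≠ χ (Es i5) := hMix x3 y5 y6 zb1 zb2 i2 hzb1s hzb2s hzbd hzb1c hzb2c hzb1z hzb2z (notU mx3 n12 n15) (notU my5 (Ne.symm n24) n45) (notU my6 (Ne.symm n24) n45) nxy35 nxy36 ny56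
  rcases dich x1 y1 y2 hs1nz with hs1 | hs1
  · -- σ1 is x-colored
    have hAnz1 : χ ({x2, x3, y3} : Finset V) ≠ χ (Es i5) := hMix x2 x3 y3 zd1 zd2 i4 hzd1s hzd2s hzdd hzd1c hzd2c hzd1z hzd2z (notU mx2 n14 n15) (notU mx3 n14 n15) (notU my3 n34 n35) nx23 nxy23 nxy33
    have hBnz1 : χ ({x4, x5, y4} : Finset V) ≠ χ (Es i5) := hMix x4 x5 y4 zc1 zc2 i3 hzc1s hzc2s hzcd hzc1c hzc2c hzc1z hzc2z (notU mx4 n23 n25) (notU mx5 n23 n25) (notU my4 (Ne.symm n34) n45) nx45 nxy44 nxy54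
    have hCnz1 : χ ({x6, y5, y6} : Finset V) ≠ χ (Es i5) := hMix x6 y5 y6 za1 za2 i1 hza1s hza2s hzad hza1c hza2c hza1z hza2z (notU mx6 (Ne.symm n12) n25) (notU my5 (Ne.symm n14) n45) (notU my6 (Ne.symm n14) n45) nxy65 nxy66 ny56
    have hKB1 : χ ({x2, x3, x6} : Finset V) = χ (Es i1) := (hXcl x2 x3 x6 mu2 mu3 mu6 nx23 nx26 nx36)
    have hKC1 : χ ({x2, x3, x4} : Finset V) = χ (Es i1) := (hXcl x2 x3 x4 mu2 mu3 mu4 nx23 nx24 nx34)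
    rcases dich x2 x3 y3 hAnz1 with hA | hA
    · exact H3 χ hNo (card3 nxy11 nxy12 ny12) (card3 nx23 nxy23 nxy33) (hEcard i2) (disj33 nx12 nx13 nxy13 (nxy21).symm (nxy31).symm ny13 (nxy22).symm (nxy32).symm ny23) (dpt3 (notT mx1 n12) (notT my1 (Ne.symm n23)) (notT my2 (Ne.symm n23))) (dpt3 (notT mx2 n12) (notT mx3 n12) (notT my3 (Ne.symm n23))) (hs1.trans hA.symm) (hs1.trans e12)
    rcases dich x4 x5 y4 hBnz1 with hB | hB
    · exact H3 χ hNo (card3 nxy11 nxy12 ny12) (card3 nx45 nxy44 nxy54) (card3 nx23 nx26 nx36) (disj33 nx14 nx15 nxy14 (nxy41).symm (nxy51).symm ny14 (nxy42).symm (nxy52).symm ny24) (disj33 nx12 nx13 nx16 (nxy21).symm (nxy31).symm (nxy61).symm (nxy22).symm (nxy32).symm (nxy62).symm) (disj33 (nx24).symm (nx34).symm nx46 (nx25).symm (nx35).symm nx56 (nxy24).symm (nxy34).symm (nxy64).symm) (hs1.trans hB.symm) (hs1.trans hKB1.symm)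
    rcases dich x6 y5 y6 hCnz1 with hC | hC
    · exact H3 χ hNo (card3 nxy11 nxy12 ny12) (card3 nxy65 nxy66 ny56) (card3 nx23 nx24 nx34) (disj33 nx16 nxy15 nxy16 (nxy61).symm ny15 ny16 (nxy62).symm ny25 ny26) (disj33 nx12 nx13 nx14 (nxy21).symm (nxy31).symm (nxy41).symm (nxy22).symm (nxy32).symm (nxy42).symm) (disj33 (nx26).symm (nx36).symm (nx46).symm (nxy25).symm (nxy35).symm (nxy45).symm (nxy26).symm (nxy36).symm (nxy46).symm) (hs1.trans hC.symm) (hs1.trans hKC1.symm)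
    · exact H3 χ hNo (card3 nx23 nxy23 nxy33) (card3 nx45 nxy44 nxy54) (card3 nxy65 nxy66 ny56) (disj33 nx24 nx25 nxy24 nx34 nx35 nxy34 (nxy43).symm (nxy53).symm ny34) (disj33 nx26 nxy25 nxy26 nx36 nxy35 nxy36 (nxy63).symm ny35 ny36) (disj33 nx46 nxy45 nxy46 nx56 nxy55 nxy56 (nxy64).symm ny45 ny46) (hA.trans hB.symm) (hA.trans hC.symm)
  rcases dich x2 y3 y4 hs2nz with hs2 | hs2
  · -- σ2 is x-colored
    have hAnz2 : χ ({x1, x3, y1} : Finset V) ≠ χ (Es i5) := hMix x1 x3 y1 zd1 zd2 i4 hzd1s hzd2s hzdd hzd1c hzd2c hzd1z hzd2z (notU mx1 n14 n15) (notU mx3 n14 n15) (notU my1 n34 n35) nx13 nxy11 nxy31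
    have hBnz2 : χ ({x4, x5, y2} : Finset V) ≠ χ (Es i5) := hMix x4 x5 y2 zd1 zd2 i4 hzd1s hzd2s hzdd hzd1c hzd2c hzd1z hzd2z (notU mx4 n24 n25) (notU mx5 n24 n25) (notU my2 n34 n35) nx45 nxy42 nxy52
    have hCnz2 : χ ({x6, y5, y6} : Finset V) ≠ χ (Es i5) := hMix x6 y5 y6 za1 za2 i1 hza1s hza2s hzad hza1c hza2c hza1z hza2z (notU mx6 (Ne.symm n12) n25) (notU my5 (Ne.symm n14) n45) (notU my6 (Ne.symm n14) n45) nxy65 nxy66 ny56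
    have hKB2 : χ ({x1, x3, x6} : Finset V) = χ (Es i1) := (hXcl x1 x3 x6 mu1 mu3 mu6 nx13 nx16 nx36)
    have hKC2 : χ ({x1, x3, x4} : Finset V) = χ (Es i1) := (hXcl x1 x3 x4 mu1 mu3 mu4 nx13 nx14 nx34)
    rcases dich x1 x3 y1 hAnz2 with hA | hA
    · exact H3 χ hNo (card3 nxy23 nxy24 ny34) (card3 nx13 nxy11 nxy31) (hEcard i2) (disj33 (nx12).symm nx23 nxy21 (nxy13).symm (nxy33).symm (ny13).symm (nxy14).symm (nxy34).symm (ny14).symm) (dpt3 (notT mx2 n12) (notT my3 (Ne.symm n23)) (notT my4 (Ne.symm n24))) (dpt3 (notT mx1 n12) (notT mx3 n12) (notT my1 (Ne.symm n23))) (hs2.trans hA.symm) (hs2.trans e12)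
    rcases dich x4 x5 y2 hBnz2 with hB | hB
    · exact H3 χ hNo (card3 nxy23 nxy24 ny34) (card3 nx45 nxy42 nxy52) (card3 nx13 nx16 nx36) (disj33 nx24 nx25 nxy22 (nxy43).symm (nxy53).symm (ny23).symm (nxy44).symm (nxy54).symm (ny24).symm) (disj33 (nx12).symm nx23 nx26 (nxy13).symm (nxy33).symm (nxy63).symm (nxy14).symm (nxy34).symm (nxy64).symm) (disj33 (nx14).symm (nx34).symm nx46 (nx15).symm (nx35).symm nx56 (nxy12).symm (nxy32).symm (nxy62).symm) (hs2.trans hB.symm) (hs2.trans hKB2.symm)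
    rcases dich x6 y5 y6 hCnz2 with hC | hC
    · exact H3 χ hNo (card3 nxy23 nxy24 ny34) (card3 nxy65 nxy66 ny56) (card3 nx13 nx14 nx34) (disj33 nx26 nxy25 nxy26 (nxy63).symm ny35 ny36 (nxy64).symm ny45 ny46) (disj33 (nx12).symm nx23 nx24 (nxy13).symm (nxy33).symm (nxy43).symm (nxy14).symm (nxy34).symm (nxy44).symm) (disj33 (nx16).symm (nx36).symm (nx46).symm (nxy15).symm (nxy35).symm (nxy45).symm (nxy16).symm (nxy36).symm (nxy46).symm) (hs2.trans hC.symm) (hs2.trans hKC2.symm)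
    · exact H3 χ hNo (card3 nx13 nxy11 nxy31) (card3 nx45 nxy42 nxy52) (card3 nxy65 nxy66 ny56) (disj33 nx14 nx15 nxy12 nx34 nx35 nxy32 (nxy41).symm (nxy51).symm ny12) (disj33 nx16 nxy15 nxy16 nx36 nxy35 nxy36 (nxy61).symm ny15 ny16) (disj33 nx46 nxy45 nxy46 nx56 nxy55 nxy56 (nxy62).symm ny25 ny26) (hA.trans hB.symm) (hA.trans hC.symm)
  rcases dich x3 y5 y6 hs3nz with hs3 | hs3
  · -- σ3 is x-colored
    have hAnz3 : χ ({x1, x2, y1} : Finset V) ≠ χ (Es i5) := hMix x1 x2 y1 zd1 zd2 i4 hzd1s hzd2s hzdd hzd1c hzd2c hzd1z hzd2z (notU mx1 n14 n15) (notU mx2 n14 n15) (notU my1 n34 n35) nx12 nxy11 nxy21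
    have hBnz3 : χ ({x4, x5, y2} : Finset V) ≠ χ (Es i5) := hMix x4 x5 y2 zd1 zd2 i4 hzd1s hzd2s hzdd hzd1c hzd2c hzd1z hzd2z (notU mx4 n24 n25) (notU mx5 n24 n25) (notU my2 n34 n35) nx45 nxy42 nxy52
    have hCnz3 : χ ({x6, y3, y4} : Finset V) ≠ χ (Es i5) := hMix x6 y3 y4 za1 za2 i1 hza1s hza2s hzad hza1c hza2c hza1z hza2z (notU mx6 (Ne.symm n12) n25) (notU my3 (Ne.symm n13) n35) (notU my4 (Ne.symm n14) n45) nxy63 nxy64 ny34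
    have hKB3 : χ ({x1, x2, x6} : Finset V) = χ (Es i1) := (hXcl x1 x2 x6 mu1 mu2 mu6 nx12 nx16 nx26)
    have hKC3 : χ ({x1, x2, x4} : Finset V) = χ (Es i1) := (hXcl x1 x2 x4 mu1 mu2 mu4 nx12 nx14 nx24)
    rcases dich x1 x2 y1 hAnz3 with hA | hA
    · exact H3 χ hNo (card3 nxy35 nxy36 ny56) (card3 nx12 nxy11 nxy21) (hEcard i2) (disj33 (nx13).symm (nx23).symm nxy31 (nxy15).symm (nxy25).symm (ny15).symm (nxy16).symm (nxy26).symm (ny16).symm) (dpt3 (notT mx3 n12) (notT my5 (Ne.symm n24)) (notT my6 (Ne.symm n24))) (dpt3 (notT mx1 n12) (notT mx2 n12) (notT my1 (Ne.symm n23))) (hs3.trans hA.symm) (hs3.trans e12)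
    rcases dich x4 x5 y2 hBnz3 with hB | hB
    · exact H3 χ hNo (card3 nxy35 nxy36 ny56) (card3 nx45 nxy42 nxy52) (card3 nx12 nx16 nx26) (disj33 nx34 nx35 nxy32 (nxy45).symm (nxy55).symm (ny25).symm (nxy46).symm (nxy56).symm (ny26).symm) (disj33 (nx13).symm (nx23).symm nx36 (nxy15).symm (nxy25).symm (nxy65).symm (nxy16).symm (nxy26).symm (nxy66).symm) (disj33 (nx14).symm (nx24).symm nx46 (nx15).symm (nx25).symm nx56 (nxy12).symm (nxy22).symm (nxy62).symm) (hs3.trans hB.symm) (hs3.trans hKB3.symm)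
    rcases dich x6 y3 y4 hCnz3 with hC | hC
    · exact H3 χ hNo (card3 nxy35 nxy36 ny56) (card3 nxy63 nxy64 ny34) (card3 nx12 nx14 nx24) (disj33 nx36 nxy33 nxy34 (nxy65).symm (ny35).symm (ny45).symm (nxy66).symm (ny36).symm (ny46).symm) (disj33 (nx13).symm (nx23).symm nx34 (nxy15).symm (nxy25).symm (nxy45).symm (nxy16).symm (nxy26).symm (nxy46).symm) (disj33 (nx16).symm (nx26).symm (nx46).symm (nxy13).symm (nxy23).symm (nxy43).symm (nxy14).symm (nxy24).symm (nxy44).symm) (hs3.trans hC.symm) (hs3.trans hKC3.symm)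
    · exact H3 χ hNo (card3 nx12 nxy11 nxy21) (card3 nx45 nxy42 nxy52) (card3 nxy63 nxy64 ny34) (disj33 nx14 nx15 nxy12 nx24 nx25 nxy22 (nxy41).symm (nxy51).symm ny12) (disj33 nx16 nxy13 nxy14 nx26 nxy23 nxy24 (nxy61).symm ny13 ny14) (disj33 nx46 nxy43 nxy44 nx56 nxy53 nxy54 (nxy62).symm ny23 ny24) (hA.trans hB.symm) (hA.trans hC.symm)
  · -- all three σ are y-colored: 3 disjoint mono
    exact H3 χ hNo (card3 nxy11 nxy12 ny12) (card3 nxy23 nxy24 ny34) (card3 nxy35 nxy36 ny56) (disj33 nx12 nxy13 nxy14 (nxy21).symm ny13 ny14 (nxy22).symm ny23 ny24) (disj33 nx13 nxy15 nxy16 (nxy31).symm ny15 ny16 (nxy32).symm ny25 ny26) (disj33 nx23 nxy25 nxy26 (nxy33).symm ny35 ny36 (nxy34).symm ny45 ny46) (hs1.trans hs2.symm) (hs1.trans hs3.symm)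

end TCM


theorem two_colored_matching_K16 (χ : Finset (Fin 16) → Fin 3) :
    ∃ M : Finset (Finset (Fin 16)), M.card = 5 ∧
      (∀ e ∈ M, e.card = 3) ∧
      (∀ e ∈ M, ∀ f ∈ M, e ≠ f → Disjoint e f) ∧
      ∃ c₁ c₂ : Fin 3, ∀ e ∈ M, χ e = c₁ ∨ χ e = c₂ := by
  exact TCM.main χ
end

section
/- Let χ be a 2-coloring of the 3-element subsets of a 7-element set V such that no two disjoint 3-subsets of V receive the same color. Then a contradiction arises; i.e., there is no such coloring. Equivalently: for every 2-coloring of the 3-subsets of a 7-element set, there exist two disjoint 3-subsets of the same color. -/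
theorem no_B_plus_set (χ : Finset (Fin 7) → Fin 2) :
    ∃ e f : Finset (Fin 7), e.card = 3 ∧ f.card = 3 ∧ Disjoint e f ∧ χ e = χ f := by
  by_contra h
  push_neg at h
  set A0 : Finset (Fin 7) := {0, 1, 2}
  set A1 : Finset (Fin 7) := {3, 4, 5}
  set A2 : Finset (Fin 7) := {6, 0, 1}
  set A3 : Finset (Fin 7) := {2, 3, 4}
  set A4 : Finset (Fin 7) := {5, 6, 0}
  set A5 : Finset (Fin 7) := {1, 2, 3}
  set A6 : Finset (Fin 7) := {4, 5, 6}
  have h01 : χ A0 ≠ χ A1 := h A0 A1 (by decide) (by decide) (by decide)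
  have h12 : χ A1 ≠ χ A2 := h A1 A2 (by decide) (by decide) (by decide)
  have h23 : χ A2 ≠ χ A3 := h A2 A3 (by decide) (by decide) (by decide)
  have h34 : χ A3 ≠ χ A4 := h A3 A4 (by decide) (by decide) (by decide)
  have h45 : χ A4 ≠ χ A5 := h A4 A5 (by decide) (by decide) (by decide)
  have h56 : χ A5 ≠ χ A6 := h A5 A6 (by decide) (by decide) (by decide)
  have h60 : χ A6 ≠ χ A0 := h A6 A0 (by decide) (by decide) (by decide)
  have v0 := (χ A0).isLt
  have v1 := (χ A1).isLt
  have v2 := (χ A2).isLt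
  have v3 := (χ A3).isLt
  have v4 := (χ A4).isLt
  have v5 := (χ A5).isLt
  have v6 := (χ A6).isLt
  simp only [Ne, Fin.ext_iff] at h01 h12 h23 h34 h45 h56 h60
  omega
end

section
/- Let H be a 3-coloring of the 3-subsets of a 12-element set with no 2-colored perfect matching (no 4 pairwise disjoint edges using at most 2 colors). If A is a 6-element subset containing a monochromatic perfect matching (an A-set), then the complement B = V \ A is a B-set: some color is avoided by all 3-subsets of B, and no two disjoint 3-subsets of B have the same color. -/
/-- `M` is a perfect matching of the complete 3-uniform hypergraph on 12 vertices
using at most two of the three colors under the coloring `χ`. -/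
def TwoColoredPerfectMatching (χ : Finset (Fin 12) → Fin 3)
    (M : Finset (Finset (Fin 12))) : Prop :=
  M.card = 4 ∧ (∀ e ∈ M, e.card = 3) ∧
    (∀ e ∈ M, ∀ f ∈ M, e ≠ f → Disjoint e f) ∧
    (∀ v : Fin 12, ∃ e ∈ M, v ∈ e) ∧
    ∃ c₁ c₂ : Fin 3, ∀ e ∈ M, χ e = c₁ ∨ χ e = c₂

/-- `B` is a B-set: a 6-element set such that some color is avoided by all of its
3-subsets and no two disjoint 3-subsets of `B` receive the same color. -/
def IsBSet (χ : Finset (Fin 12) → Fin 3) (B : Finset (Fin 12)) : Prop :=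
  B.card = 6 ∧
    (∃ c : Fin 3, ∀ e ⊆ B, e.card = 3 → χ e ≠ c) ∧
    ∀ e ⊆ B, ∀ f ⊆ B, e.card = 3 → f.card = 3 → Disjoint e f → χ e ≠ χ f

lemma aux_matching (χ : Finset (Fin 12) → Fin 3) (A e f g h : Finset (Fin 12))
    (hA : A.card = 6) (he : e.card = 3) (hf : f.card = 3) (hef : Disjoint e f)
    (hu : e ∪ f = A) (hg : g ⊆ Aᶜ) (hh : h ⊆ Aᶜ) (hgc : g.card = 3)
    (hhc : h.card = 3) (hgh : Disjoint g h) (hχef : χ e = χ f)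
    (hχg : χ g = χ e ∨ χ g = χ h) :
    ∃ M, TwoColoredPerfectMatching χ M := by
  have heA : e ⊆ A := hu ▸ Finset.subset_union_left
  have hfA : f ⊆ A := hu ▸ Finset.subset_union_right
  have hAc : Aᶜ.card = 6 := by
    rw [Finset.card_compl, hA]; rfl
  have hghu : g ∪ h = Aᶜ := by
    apply Finset.eq_of_subset_of_card_le (Finset.union_subset hg hh)
    rw [Finset.card_union_of_disjoint hgh, hgc, hhc, hAc]
  have hdisAAc : Disjoint A Aᶜ := disjoint_compl_right
  have deg : Disjoint e g := hdisAAc.mono heA hg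
  have deh : Disjoint e h := hdisAAc.mono heA hh
  have dfg : Disjoint f g := hdisAAc.mono hfA hg
  have dfh : Disjoint f h := hdisAAc.mono hfA hh
  have hne : ∀ (x y : Finset (Fin 12)), x.card = 3 → Disjoint x y → x ≠ y := by
    intro x y hx hxy hxy'
    subst hxy'
    rw [disjoint_self] at hxy
    simp [hxy] at hx
  refine ⟨{e, f, g, h}, ?_, ?_, ?_, ?_, χ e, χ h, ?_⟩
  · rw [Finset.card_insert_of_notMem, Finset.card_insert_of_notMem,
      Finset.card_insert_of_notMem, Finset.card_singleton]
    · simp [hne g h hgc hgh]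
    · simp [hne f g hf dfg, hne f h hf dfh]
    · simp [hne e f he hef, hne e g he deg, hne e h he deh]
  · intro x hx; simp only [Finset.mem_insert, Finset.mem_singleton] at hx
    rcases hx with rfl|rfl|rfl|rfl <;> assumption
  · intro x hx y hy hxy
    simp only [Finset.mem_insert, Finset.mem_singleton] at hx hy
    rcases hx with rfl|rfl|rfl|rfl <;> rcases hy with rfl|rfl|rfl|rfl <;>
      first
        | exact absurd rfl hxy
        | assumption
        | exact hef.symm
        | exact deg.symm
        | exact deh.symm
        | exact dfg.symm
        | exact dfh.symm
        | exact hgh.symm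
  · intro v
    by_cases hv : v ∈ A
    · rw [← hu] at hv
      rcases Finset.mem_union.mp hv with hv|hv
      · exact ⟨e, by simp, hv⟩
      · exact ⟨f, by simp, hv⟩
    · have hv' : v ∈ Aᶜ := Finset.mem_compl.mpr hv
      rw [← hghu] at hv'
      rcases Finset.mem_union.mp hv' with hv'|hv'
      · exact ⟨g, by simp, hv'⟩
      · exact ⟨h, by simp, hv'⟩
  · intro x hx; simp only [Finset.mem_insert, Finset.mem_singleton] at hx
    rcases hx with rfl|rfl|rfl|rfl
    · left; rfl
    · left; exact hχef.symm
    · rcases hχg with h1|h1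
      · left; exact h1
      · right; exact h1
    · right; rfl

theorem complement_of_A_set_is_B_set (χ : Finset (Fin 12) → Fin 3)
    (hH : ¬ ∃ M, TwoColoredPerfectMatching χ M)
    (A : Finset (Fin 12)) (hA : A.card = 6)
    (hAset : ∃ e f : Finset (Fin 12), e.card = 3 ∧ f.card = 3 ∧ Disjoint e f ∧
      e ∪ f = A ∧ χ e = χ f) :
    IsBSet χ Aᶜ := by
  obtain ⟨e, f, he, hf, hef, hu, hχ⟩ := hAset
  have hAc : Aᶜ.card = 6 := by rw [Finset.card_compl, hA]; rfl
  refine ⟨hAc, ⟨χ e, ?_⟩, ?_⟩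
  · intro g hg hgc hχg
    have hhs : Aᶜ \ g ⊆ Aᶜ := Finset.sdiff_subset
    have hhc : (Aᶜ \ g).card = 3 := by
      rw [Finset.card_sdiff_of_subset hg, hAc, hgc]
    exact hH (aux_matching χ A e f g (Aᶜ \ g) hA he hf hef hu hg hhs hgc hhc
      Finset.disjoint_sdiff hχ (Or.inl hχg))
  · intro g hg h hh hgc hhc hgh hχgh
    exact hH (aux_matching χ A e f g h hA he hf hef hu hg hh hgc hhc hgh hχ
      (Or.inr hχgh))
end

section
/- Let H be a 3-coloring of the 3-subsets of a 12-element set V with no 2-colored perfect matching. Then for every partition of V into two 6-element sets Y and Z, at least one of Y or Z is a B-set. -/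
/-- Pure `Fin 3` combinatorics: given `c i ≠ i` for all `i`, either some color `m`
belongs to every pair `{i, c i}`, or the pairs `{i, c i}` cover everything. -/
lemma fin3_lemma (c : Fin 3 → Fin 3) (h : ∀ i, c i ≠ i) :
    (∃ m : Fin 3, ∀ i, m = i ∨ m = c i) ∨
    (∀ a b : Fin 3, ∃ i, (a = i ∨ a = c i) ∧ (b = i ∨ b = c i)) := by
  revert h; revert c; decide

open Finset in
/-- From 3-subsets `e ⊆ Y`, `g ⊆ Z` whose four sets `e, Y\e, g, Z\g` use at most two
colors, build a two-colored perfect matching. -/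
lemma build_matching (χ : Finset (Fin 12) → Fin 3)
    (Y Z : Finset (Fin 12)) (hY : Y.card = 6) (hZ : Z.card = 6)
    (hdisj : Disjoint Y Z) (hcover : Y ∪ Z = Finset.univ)
    (e g : Finset (Fin 12)) (he : e ⊆ Y) (hg : g ⊆ Z)
    (he3 : e.card = 3) (hg3 : g.card = 3)
    (c₁ c₂ : Fin 3)
    (h1 : χ e = c₁ ∨ χ e = c₂) (h2 : χ (Y \ e) = c₁ ∨ χ (Y \ e) = c₂)
    (h3 : χ g = c₁ ∨ χ g = c₂) (h4 : χ (Z \ g) = c₁ ∨ χ (Z \ g) = c₂) :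
    ∃ M, TwoColoredPerfectMatching χ M := by
  have hf3 : (Y \ e).card = 3 := by rw [card_sdiff_of_subset he, hY, he3]
  have hh3 : (Z \ g).card = 3 := by rw [card_sdiff_of_subset hg, hZ, hg3]
  have hne : e.Nonempty := card_pos.mp (by omega)
  have hfne : (Y \ e).Nonempty := card_pos.mp (by omega)
  have hgne : g.Nonempty := card_pos.mp (by omega)
  have hhne : (Z \ g).Nonempty := card_pos.mp (by omega)
  have d_ef : Disjoint e (Y \ e) := disjoint_sdiff
  have d_gh : Disjoint g (Z \ g) := disjoint_sdiff
  have d_eg : Disjoint e g := hdisj.mono he hg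
  have d_eh : Disjoint e (Z \ g) := hdisj.mono he sdiff_subset
  have d_fg : Disjoint (Y \ e) g := hdisj.mono sdiff_subset hg
  have d_fh : Disjoint (Y \ e) (Z \ g) := hdisj.mono sdiff_subset sdiff_subset
  have nd : ∀ {s t : Finset (Fin 12)}, Disjoint s t → s.Nonempty → s ≠ t := by
    intro s t hd hs hst
    exact hs.ne_empty (hst.trans (disjoint_self.mp (hst ▸ hd)))
  have n_ef := nd d_ef hne
  have n_eg := nd d_eg hne
  have n_eh := nd d_eh hne
  have n_fg := nd d_fg hfne
  have n_fh := nd d_fh hfne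
  have n_gh := nd d_gh hgne
  refine ⟨{e, Y \ e, g, Z \ g}, ?_, ?_, ?_, ?_, c₁, c₂, ?_⟩
  · rw [card_insert_of_notMem (by simp [n_ef, n_eg, n_eh]),
      card_insert_of_notMem (by simp [n_fg, n_fh]),
      card_insert_of_notMem (by simp [n_gh]), card_singleton]
  · intro a ha
    simp only [mem_insert, mem_singleton] at ha
    rcases ha with rfl | rfl | rfl | rfl <;> assumption
  · intro a ha b hb hab
    simp only [mem_insert, mem_singleton] at ha hb
    rcases ha with rfl | rfl | rfl | rfl <;> rcases hb with rfl | rfl | rfl | rfl <;>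
      first
        | exact (hab rfl).elim
        | exact d_ef | exact d_ef.symm | exact d_eg | exact d_eg.symm
        | exact d_eh | exact d_eh.symm | exact d_fg | exact d_fg.symm
        | exact d_fh | exact d_fh.symm | exact d_gh | exact d_gh.symm
  · intro v
    have hv : v ∈ Y ∪ Z := by rw [hcover]; exact mem_univ v
    simp only [mem_union] at hv
    rcases hv with hv | hv
    · by_cases hve : v ∈ e
      · exact ⟨e, by simp, hve⟩
      · exact ⟨Y \ e, by simp, mem_sdiff.mpr ⟨hv, hve⟩⟩
    · by_cases hvg : v ∈ g
      · exact ⟨g, by simp, hvg⟩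
      · exact ⟨Z \ g, by simp, mem_sdiff.mpr ⟨hv, hvg⟩⟩
  · intro a ha
    simp only [mem_insert, mem_singleton] at ha
    rcases ha with rfl | rfl | rfl | rfl <;> assumption

open Finset in
/-- Two disjoint 3-subsets of a 6-set are complementary. -/
lemma compl_pair {B : Finset (Fin 12)} (h6 : B.card = 6) {e f : Finset (Fin 12)}
    (he : e ⊆ B) (hf : f ⊆ B) (he3 : e.card = 3) (hf3 : f.card = 3)
    (hd : Disjoint e f) : f = B \ e := by
  refine Finset.eq_of_subset_of_card_le
    (fun x hx => mem_sdiff.mpr ⟨hf hx, fun hxe => disjoint_left.mp hd hxe hx⟩) ?_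
  rw [card_sdiff_of_subset he, h6, he3, hf3]

open Finset in
lemma bset_of_claim (χ : Finset (Fin 12) → Fin 3) {Z : Finset (Fin 12)}
    (hZ : Z.card = 6) (m : Fin 3)
    (claim : ∀ g ⊆ Z, g.card = 3 → χ g ≠ m ∧ χ g ≠ χ (Z \ g)) :
    IsBSet χ Z := by
  refine ⟨hZ, ⟨m, fun g hg hg3 => (claim g hg hg3).1⟩, ?_⟩
  intro a ha b hb ha3 hb3 hd
  have hba : b = Z \ a := compl_pair hZ ha hb ha3 hb3 hd
  rw [hba]
  exact (claim a ha ha3).2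

open Finset in
lemma key (χ : Finset (Fin 12) → Fin 3)
    (hH : ¬ ∃ M, TwoColoredPerfectMatching χ M)
    (Y Z : Finset (Fin 12)) (hY : Y.card = 6) (hZ : Z.card = 6)
    (hdisj : Disjoint Y Z) (hcover : Y ∪ Z = Finset.univ)
    (hnY : ¬ IsBSet χ Y) : IsBSet χ Z := by
  by_cases hmono : ∃ e ⊆ Y, ∃ f ⊆ Y, e.card = 3 ∧ f.card = 3 ∧ Disjoint e f ∧ χ e = χ f
  · -- Case A: Y has a monochromatic complementary pair
    obtain ⟨e, he, f, hf, he3, hf3, hd, hcc⟩ := hmono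
    have hfe : f = Y \ e := compl_pair hY he hf he3 hf3 hd
    have hYe : χ (Y \ e) = χ e := by rw [← hfe, hcc]
    apply bset_of_claim χ hZ (χ e)
    intro g hg hg3
    constructor
    · intro hgm
      exact hH (build_matching χ Y Z hY hZ hdisj hcover e g he hg he3 hg3
        (χ e) (χ (Z \ g)) (Or.inl rfl) (Or.inl hYe) (Or.inl hgm) (Or.inr rfl))
    · intro hgg
      exact hH (build_matching χ Y Z hY hZ hdisj hcover e g he hg he3 hg3
        (χ e) (χ g) (Or.inl rfl) (Or.inl hYe) (Or.inr rfl) (Or.inr hgg.symm))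
  · -- Case B: no monochromatic pair in Y, so all three colors occur on 3-subsets of Y
    push_neg at hmono
    have hmono' : ∀ e ⊆ Y, ∀ f ⊆ Y, e.card = 3 → f.card = 3 → Disjoint e f → χ e ≠ χ f := by
      intro e he f hf he3 hf3 hd hcc
      exact hmono e he f hf he3 hf3 hd hcc
    have hQ : ¬ ∃ c : Fin 3, ∀ e ⊆ Y, e.card = 3 → χ e ≠ c :=
      fun hq => hnY ⟨hY, hq, hmono'⟩
    push_neg at hQ
    choose E hE1 hE2 hE3 using hQ
    set c : Fin 3 → Fin 3 := fun i => χ (Y \ E i) with hc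
    have hEc : ∀ i, χ (Y \ E i) = c i := fun i => rfl
    have hsub : ∀ i, Y \ E i ⊆ Y := fun i => sdiff_subset
    have hcard : ∀ i, (Y \ E i).card = 3 := fun i => by
      rw [card_sdiff_of_subset (hE1 i), hY, hE2 i]
    have hne : ∀ i, c i ≠ i := by
      intro i h
      exact hmono' (E i) (hE1 i) (Y \ E i) (hsub i) (hE2 i) (hcard i)
        disjoint_sdiff (by rw [hE3 i, hEc i, h])
    rcases fin3_lemma c hne with ⟨m, hm⟩ | hall
    · apply bset_of_claim χ hZ m
      intro g hg hg3
      constructor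
      · intro hgm
        set b := χ (Z \ g) with hb
        have h3 : χ g = b ∨ χ g = c b := by rw [hgm]; exact hm b
        exact hH (build_matching χ Y Z hY hZ hdisj hcover (E b) g (hE1 b) hg (hE2 b) hg3
          b (c b) (Or.inl (hE3 b)) (Or.inr rfl) h3 (Or.inl rfl))
      · intro hgg
        set a := χ g with ha
        exact hH (build_matching χ Y Z hY hZ hdisj hcover (E a) g (hE1 a) hg (hE2 a) hg3
          a (c a) (Or.inl (hE3 a)) (Or.inr rfl) (Or.inl rfl) (Or.inl hgg.symm))
    · exfalso
      obtain ⟨g, hg, hg3⟩ := Finset.exists_subset_card_eq (s := Z) (n := 3) (by omega)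
      obtain ⟨i, hi1, hi2⟩ := hall (χ g) (χ (Z \ g))
      exact hH (build_matching χ Y Z hY hZ hdisj hcover (E i) g (hE1 i) hg (hE2 i) hg3
        i (c i) (Or.inl (hE3 i)) (Or.inr rfl) hi1 hi2)

theorem balanced_partition_has_B_set (χ : Finset (Fin 12) → Fin 3)
    (hH : ¬ ∃ M, TwoColoredPerfectMatching χ M)
    (Y Z : Finset (Fin 12)) (hY : Y.card = 6) (hZ : Z.card = 6)
    (hdisj : Disjoint Y Z) (hcover : Y ∪ Z = Finset.univ) :
    IsBSet χ Y ∨ IsBSet χ Z := by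
  by_cases h : IsBSet χ Y
  · exact Or.inl h
  · exact Or.inr (key χ hH Y Z hY hZ hdisj hcover h)
end

section
/- Let H be a 3-coloring of the 3-subsets of a 12-element set V with no 2-colored perfect matching. Then there is no 5-element subset X of V such that the 3-subsets of X use all three colors. -/
private lemma fin3_avoid : ∀ c : Fin 3, ∃ d₁ d₂ : Fin 3, ∀ d, d ≠ c → d = d₁ ∨ d = d₂ := by
  decide

private lemma fin3_avoid2 : ∀ a b : Fin 3, ∃ c : Fin 3, c ≠ a ∧ c ≠ b := by decide

private lemma fin3_common : ∀ a b a' b' : Fin 3, a ≠ b → a' ≠ b' →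
    ∃ δ : Fin 3, (δ = a ∨ δ = b) ∧ (δ = a' ∨ δ = b') := by decide

private lemma fin3_pair_eq : ∀ a b a' b' t : Fin 3, a ≠ b → a' ≠ b' →
    (∀ c, c ≠ a → c ≠ b → c = t) → (∀ c, c ≠ a' → c ≠ b' → c = t) →
    ({a, b} : Finset (Fin 3)) = {a', b'} := by decide

private lemma fin3_lemA : ∀ α β γ xA xB xB' : Fin 3, α ≠ β → γ ≠ α → γ ≠ β →
    ({α, γ} : Finset (Fin 3)) = {xA, xB} → ({β, γ} : Finset (Fin 3)) = {xA, xB'} →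
    xB = α ∧ xB' = β := by decide

private lemma fin3_lemB : ∀ α β γ xC xC' xD : Fin 3, α ≠ β → γ ≠ α → γ ≠ β →
    ({α, xC} : Finset (Fin 3)) = {β, xC'} → ({α, xC} : Finset (Fin 3)) = {γ, xD} →
    False := by decide

private lemma card3' {x y z : Fin 12} (h1 : x ≠ y) (h2 : x ≠ z) (h3 : y ≠ z) :
    ({x, y, z} : Finset (Fin 12)).card = 3 := by
  rw [Finset.card_insert_of_notMem (by simp [h1, h2]),
      Finset.card_insert_of_notMem (by simp [h3]), Finset.card_singleton]

private lemma disj3 {x y z x' y' z' : Fin 12} (h11 : x ≠ x') (h12 : x ≠ y') (h13 : x ≠ z')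
    (h21 : y ≠ x') (h22 : y ≠ y') (h23 : y ≠ z')
    (h31 : z ≠ x') (h32 : z ≠ y') (h33 : z ≠ z') :
    Disjoint ({x, y, z} : Finset (Fin 12)) {x', y', z'} := by
  rw [Finset.disjoint_left]
  intro a ha hb
  simp only [Finset.mem_insert, Finset.mem_singleton] at ha hb
  rcases ha with rfl | rfl | rfl <;> rcases hb with h | h | h <;> simp_all

variable {χ : Finset (Fin 12) → Fin 3} {X : Finset (Fin 12)}

private lemma disj_ne {e f : Finset (Fin 12)} (h : Disjoint e f) (he : e.card = 3) :
    e ≠ f := by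
  rintro rfl
  obtain ⟨x, hx⟩ := Finset.card_pos.mp (by omega : 0 < e.card)
  exact Finset.disjoint_left.mp h hx hx

/-- Every perfect matching of `Fin 12` into four triples uses every color. -/
private lemma allColors (hH : ¬ ∃ M, TwoColoredPerfectMatching χ M)
    {e₁ e₂ e₃ e₄ : Finset (Fin 12)}
    (c₁ : e₁.card = 3) (c₂ : e₂.card = 3) (c₃ : e₃.card = 3) (c₄ : e₄.card = 3)
    (d₁₂ : Disjoint e₁ e₂) (d₁₃ : Disjoint e₁ e₃) (d₁₄ : Disjoint e₁ e₄)
    (d₂₃ : Disjoint e₂ e₃) (d₂₄ : Disjoint e₂ e₄) (d₃₄ : Disjoint e₃ e₄)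
    (hu : ∀ v : Fin 12, v ∈ e₁ ∨ v ∈ e₂ ∨ v ∈ e₃ ∨ v ∈ e₄) (c : Fin 3) :
    χ e₁ = c ∨ χ e₂ = c ∨ χ e₃ = c ∨ χ e₄ = c := by
  by_contra hc
  push_neg at hc
  obtain ⟨n₁, n₂, n₃, n₄⟩ := hc
  obtain ⟨d₁, d₂, hd⟩ := fin3_avoid c
  have h12 := disj_ne d₁₂ c₁
  have h13 := disj_ne d₁₃ c₁
  have h14 := disj_ne d₁₄ c₁
  have h23 := disj_ne d₂₃ c₂
  have h24 := disj_ne d₂₄ c₂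
  have h34 := disj_ne d₃₄ c₃
  refine hH ⟨{e₁, e₂, e₃, e₄}, ?_, ?_, ?_, ?_, d₁, d₂, ?_⟩
  · rw [Finset.card_insert_of_notMem (by simp [h12, h13, h14]),
        Finset.card_insert_of_notMem (by simp [h23, h24]),
        Finset.card_insert_of_notMem (by simp [h34]), Finset.card_singleton]
  · intro e he
    simp only [Finset.mem_insert, Finset.mem_singleton] at he
    rcases he with rfl | rfl | rfl | rfl <;> assumption
  · intro e he f hf hef
    simp only [Finset.mem_insert, Finset.mem_singleton] at he hf
    rcases he with rfl | rfl | rfl | rfl <;> rcases hf with rfl | rfl | rfl | rfl <;>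
      first
        | exact absurd rfl hef
        | assumption
        | exact d₁₂.symm
        | exact d₁₃.symm
        | exact d₁₄.symm
        | exact d₂₃.symm
        | exact d₂₄.symm
        | exact d₃₄.symm
  · intro v
    rcases hu v with h | h | h | h
    · exact ⟨e₁, by simp, h⟩
    · exact ⟨e₂, by simp, h⟩
    · exact ⟨e₃, by simp, h⟩
    · exact ⟨e₄, by simp, h⟩
  · intro e he
    simp only [Finset.mem_insert, Finset.mem_singleton] at he
    rcases he with rfl | rfl | rfl | rfl
    · exact hd _ n₁
    · exact hd _ n₂
    · exact hd _ n₃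
    · exact hd _ n₄

/-- Facts about the completion triple `univ \ (e ∪ (g ∪ h))`. -/
private lemma completion {e g h : Finset (Fin 12)} (he : e ⊆ X) (hg : g ⊆ Xᶜ) (hh : h ⊆ Xᶜ)
    (ce : e.card = 3) (cg : g.card = 3) (ch : h.card = 3) (dgh : Disjoint g h) :
    (Finset.univ \ (e ∪ (g ∪ h))).card = 3 ∧
    Disjoint e (Finset.univ \ (e ∪ (g ∪ h))) ∧
    Disjoint (Finset.univ \ (e ∪ (g ∪ h))) g ∧
    Disjoint (Finset.univ \ (e ∪ (g ∪ h))) h ∧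
    Disjoint e g ∧ Disjoint e h ∧
    (∀ v : Fin 12, v ∈ e ∨ v ∈ Finset.univ \ (e ∪ (g ∪ h)) ∨ v ∈ g ∨ v ∈ h) := by
  have dXc : Disjoint X Xᶜ := disjoint_compl_right
  have deg : Disjoint e g := dXc.mono he hg
  have deh : Disjoint e h := dXc.mono he hh
  have dA : Disjoint e (g ∪ h) := Finset.disjoint_union_right.mpr ⟨deg, deh⟩
  have cardA : (e ∪ (g ∪ h)).card = 9 := by
    rw [Finset.card_union_of_disjoint dA, Finset.card_union_of_disjoint dgh, ce, cg, ch]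
  have dT : ∀ {s : Finset (Fin 12)}, s ⊆ e ∪ (g ∪ h) →
      Disjoint (Finset.univ \ (e ∪ (g ∪ h))) s := by
    intro s hs
    rw [Finset.disjoint_left]
    intro a haT has
    exact (Finset.mem_sdiff.mp haT).2 (hs has)
  refine ⟨?_, ?_, ?_, ?_, deg, deh, ?_⟩
  · rw [Finset.card_sdiff_of_subset (Finset.subset_univ _), cardA, Finset.card_univ, Fintype.card_fin]
  · exact (dT Finset.subset_union_left).symm
  · exact dT (Finset.subset_union_left.trans Finset.subset_union_right)
  · exact dT (Finset.subset_union_right.trans Finset.subset_union_right)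
  · intro v
    by_cases hv : v ∈ e ∪ (g ∪ h)
    · rcases Finset.mem_union.mp hv with h' | h'
      · exact Or.inl h'
      · rcases Finset.mem_union.mp h' with h'' | h''
        · exact Or.inr (Or.inr (Or.inl h''))
        · exact Or.inr (Or.inr (Or.inr h''))
    · exact Or.inr (Or.inl (Finset.mem_sdiff.mpr ⟨Finset.mem_univ _, hv⟩))

/-- Two disjoint triples in the complement of a rainbow 5-set get distinct colors. -/
private lemma L1 (hH : ¬ ∃ M, TwoColoredPerfectMatching χ M)
    (hrain : ∀ c : Fin 3, ∃ e ⊆ X, e.card = 3 ∧ χ e = c)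
    {g h : Finset (Fin 12)} (hg : g ⊆ Xᶜ) (hh : h ⊆ Xᶜ)
    (cg : g.card = 3) (ch : h.card = 3) (dgh : Disjoint g h) : χ g ≠ χ h := by
  intro heq
  obtain ⟨e, he, ce, hce⟩ := hrain (χ g)
  obtain ⟨cT, deT, dTg, dTh, deg, deh, cov⟩ := completion he hg hh ce cg ch dgh
  obtain ⟨c, hc1, hc2⟩ := fin3_avoid2 (χ g) (χ (Finset.univ \ (e ∪ (g ∪ h))))
  rcases allColors hH ce cT cg ch deT deg deh dTg dTh dgh cov c with h' | h' | h' | h'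
  · rw [hce] at h'; exact hc1 h'.symm
  · exact hc2 h'.symm
  · exact hc1 h'.symm
  · rw [← heq] at h'; exact hc1 h'.symm

/-- Two partitions of the same 6-subset of `Xᶜ` into two triples get the same
color pair. -/
private lemma L3 (hH : ¬ ∃ M, TwoColoredPerfectMatching χ M)
    (hrain : ∀ c : Fin 3, ∃ e ⊆ X, e.card = 3 ∧ χ e = c)
    {g h g' h' : Finset (Fin 12)} (hg : g ⊆ Xᶜ) (hh : h ⊆ Xᶜ) (hg' : g' ⊆ Xᶜ) (hh' : h' ⊆ Xᶜ)
    (cg : g.card = 3) (ch : h.card = 3) (cg' : g'.card = 3) (ch' : h'.card = 3)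
    (dgh : Disjoint g h) (dgh' : Disjoint g' h') (hZ : g ∪ h = g' ∪ h') :
    ({χ g, χ h} : Finset (Fin 3)) = {χ g', χ h'} := by
  have hne := L1 hH hrain hg hh cg ch dgh
  have hne' := L1 hH hrain hg' hh' cg' ch' dgh'
  obtain ⟨δ, hδ1, hδ2⟩ := fin3_common (χ g) (χ h) (χ g') (χ h') hne hne'
  obtain ⟨e, he, ce, hce⟩ := hrain δ
  obtain ⟨cT, deT, dTg, dTh, deg, deh, cov⟩ := completion he hg hh ce cg ch dgh
  obtain ⟨cT', deT', dTg', dTh', deg', deh', cov'⟩ := completion he hg' hh' ce cg' ch' dgh'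
  rw [← hZ] at cT' deT' dTg' dTh' cov'
  have key1 : ∀ cc : Fin 3, cc ≠ χ g → cc ≠ χ h → cc = χ (Finset.univ \ (e ∪ (g ∪ h))) := by
    intro cc h1 h2
    have h0 : cc ≠ χ e := by
      rw [hce]; rcases hδ1 with h' | h' <;> rw [h'] <;> assumption
    rcases allColors hH ce cT cg ch deT deg deh dTg dTh dgh cov cc with h' | h' | h' | h'
    · exact absurd h' h0.symm
    · exact h'.symm
    · exact absurd h' h1.symm
    · exact absurd h' h2.symm
  have key2 : ∀ cc : Fin 3, cc ≠ χ g' → cc ≠ χ h' → cc = χ (Finset.univ \ (e ∪ (g ∪ h))) := by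
    intro cc h1 h2
    have h0 : cc ≠ χ e := by
      rw [hce]; rcases hδ2 with h' | h' <;> rw [h'] <;> assumption
    rcases allColors hH ce cT' cg' ch' deT' deg' deh' dTg' dTh' dgh' cov' cc
      with h' | h' | h' | h'
    · exact absurd h' h0.symm
    · exact h'.symm
    · exact absurd h' h1.symm
    · exact absurd h' h2.symm
  exact fin3_pair_eq _ _ _ _ _ hne hne' key1 key2

/-- Two triples of `Xᶜ` sharing two vertices (with the rest of `Xᶜ` disjoint from
both) get the same color. -/
private lemma L5 (hH : ¬ ∃ M, TwoColoredPerfectMatching χ M)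
    (hrain : ∀ c : Fin 3, ∃ e ⊆ X, e.card = 3 ∧ χ e = c)
    (b : Fin 7 → Fin 12) (hd : ∀ i j : Fin 7, i ≠ j → b i ≠ b j)
    (hmem : ∀ i, b i ∈ Xᶜ) :
    χ {b 0, b 1, b 2} = χ {b 0, b 1, b 3} := by
  by_contra hne
  have sub : ∀ i j k : Fin 7, ({b i, b j, b k} : Finset (Fin 12)) ⊆ Xᶜ := by
    intro i j k x hx
    simp only [Finset.mem_insert, Finset.mem_singleton] at hx
    rcases hx with rfl | rfl | rfl <;> exact hmem _
  have c3 : ∀ i j k : Fin 7, i ≠ j → i ≠ k → j ≠ k →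
      ({b i, b j, b k} : Finset (Fin 12)).card = 3 :=
    fun i j k h1 h2 h3 => card3' (hd _ _ h1) (hd _ _ h2) (hd _ _ h3)
  have dj : ∀ i j k l m n : Fin 7, i ≠ l → i ≠ m → i ≠ n → j ≠ l → j ≠ m → j ≠ n →
      k ≠ l → k ≠ m → k ≠ n →
      Disjoint ({b i, b j, b k} : Finset (Fin 12)) {b l, b m, b n} :=
    fun i j k l m n h1 h2 h3 h4 h5 h6 h7 h8 h9 =>
      disj3 (hd _ _ h1) (hd _ _ h2) (hd _ _ h3) (hd _ _ h4) (hd _ _ h5) (hd _ _ h6)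
        (hd _ _ h7) (hd _ _ h8) (hd _ _ h9)
  -- s = {0,1,2}, s' = {0,1,3}, t = {4,5,6}, A = {0,1,4}, B = {2,5,6}, B' = {3,5,6}
  -- C = {1,3,4}, C' = {1,2,4}, D = {1,2,3}
  have hγα : χ ({b 4, b 5, b 6} : Finset (Fin 12)) ≠ χ {b 0, b 1, b 2} :=
    L1 hH hrain (sub 4 5 6) (sub 0 1 2) (c3 4 5 6 (by decide) (by decide) (by decide))
      (c3 0 1 2 (by decide) (by decide) (by decide))
      (dj 4 5 6 0 1 2 (by decide) (by decide) (by decide) (by decide) (by decide)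
        (by decide) (by decide) (by decide) (by decide))
  have hγβ : χ ({b 4, b 5, b 6} : Finset (Fin 12)) ≠ χ {b 0, b 1, b 3} :=
    L1 hH hrain (sub 4 5 6) (sub 0 1 3) (c3 4 5 6 (by decide) (by decide) (by decide))
      (c3 0 1 3 (by decide) (by decide) (by decide))
      (dj 4 5 6 0 1 3 (by decide) (by decide) (by decide) (by decide) (by decide)
        (by decide) (by decide) (by decide) (by decide))
  have u1 : ({b 0, b 1, b 2} : Finset (Fin 12)) ∪ {b 4, b 5, b 6}
      = {b 0, b 1, b 4} ∪ {b 2, b 5, b 6} := by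
    ext x; simp only [Finset.mem_union, Finset.mem_insert, Finset.mem_singleton]; tauto
  have u2 : ({b 0, b 1, b 3} : Finset (Fin 12)) ∪ {b 4, b 5, b 6}
      = {b 0, b 1, b 4} ∪ {b 3, b 5, b 6} := by
    ext x; simp only [Finset.mem_union, Finset.mem_insert, Finset.mem_singleton]; tauto
  have u3 : ({b 2, b 5, b 6} : Finset (Fin 12)) ∪ {b 1, b 3, b 4}
      = {b 3, b 5, b 6} ∪ {b 1, b 2, b 4} := by
    ext x; simp only [Finset.mem_union, Finset.mem_insert, Finset.mem_singleton]; tauto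
  have u4 : ({b 2, b 5, b 6} : Finset (Fin 12)) ∪ {b 1, b 3, b 4}
      = {b 4, b 5, b 6} ∪ {b 1, b 2, b 3} := by
    ext x; simp only [Finset.mem_union, Finset.mem_insert, Finset.mem_singleton]; tauto
  have Pi := L3 hH hrain (sub 0 1 2) (sub 4 5 6) (sub 0 1 4) (sub 2 5 6)
    (c3 0 1 2 (by decide) (by decide) (by decide)) (c3 4 5 6 (by decide) (by decide) (by decide))
    (c3 0 1 4 (by decide) (by decide) (by decide)) (c3 2 5 6 (by decide) (by decide) (by decide))
    (dj 0 1 2 4 5 6 (by decide) (by decide) (by decide) (by decide) (by decide)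
      (by decide) (by decide) (by decide) (by decide))
    (dj 0 1 4 2 5 6 (by decide) (by decide) (by decide) (by decide) (by decide)
      (by decide) (by decide) (by decide) (by decide)) u1
  have Pii := L3 hH hrain (sub 0 1 3) (sub 4 5 6) (sub 0 1 4) (sub 3 5 6)
    (c3 0 1 3 (by decide) (by decide) (by decide)) (c3 4 5 6 (by decide) (by decide) (by decide))
    (c3 0 1 4 (by decide) (by decide) (by decide)) (c3 3 5 6 (by decide) (by decide) (by decide))
    (dj 0 1 3 4 5 6 (by decide) (by decide) (by decide) (by decide) (by decide)
      (by decide) (by decide) (by decide) (by decide))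
    (dj 0 1 4 3 5 6 (by decide) (by decide) (by decide) (by decide) (by decide)
      (by decide) (by decide) (by decide) (by decide)) u2
  have Piii := L3 hH hrain (sub 2 5 6) (sub 1 3 4) (sub 3 5 6) (sub 1 2 4)
    (c3 2 5 6 (by decide) (by decide) (by decide)) (c3 1 3 4 (by decide) (by decide) (by decide))
    (c3 3 5 6 (by decide) (by decide) (by decide)) (c3 1 2 4 (by decide) (by decide) (by decide))
    (dj 2 5 6 1 3 4 (by decide) (by decide) (by decide) (by decide) (by decide)
      (by decide) (by decide) (by decide) (by decide))
    (dj 3 5 6 1 2 4 (by decide) (by decide) (by decide) (by decide) (by decide)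
      (by decide) (by decide) (by decide) (by decide)) u3
  have Piv := L3 hH hrain (sub 2 5 6) (sub 1 3 4) (sub 4 5 6) (sub 1 2 3)
    (c3 2 5 6 (by decide) (by decide) (by decide)) (c3 1 3 4 (by decide) (by decide) (by decide))
    (c3 4 5 6 (by decide) (by decide) (by decide)) (c3 1 2 3 (by decide) (by decide) (by decide))
    (dj 2 5 6 1 3 4 (by decide) (by decide) (by decide) (by decide) (by decide)
      (by decide) (by decide) (by decide) (by decide))
    (dj 4 5 6 1 2 3 (by decide) (by decide) (by decide) (by decide) (by decide)
      (by decide) (by decide) (by decide) (by decide)) u4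
  obtain ⟨hB, hB'⟩ := fin3_lemA (χ {b 0, b 1, b 2}) (χ {b 0, b 1, b 3})
    (χ {b 4, b 5, b 6}) (χ {b 0, b 1, b 4}) (χ {b 2, b 5, b 6}) (χ {b 3, b 5, b 6})
    hne hγα hγβ Pi Pii
  rw [hB] at Piii Piv
  rw [hB'] at Piii
  exact fin3_lemB (χ {b 0, b 1, b 2}) (χ {b 0, b 1, b 3}) (χ {b 4, b 5, b 6})
    (χ {b 1, b 3, b 4}) (χ {b 1, b 2, b 4}) (χ {b 1, b 2, b 3}) hne hγα hγβ Piii Piv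

theorem no_rainbow_K5 (χ : Finset (Fin 12) → Fin 3)
    (hH : ¬ ∃ M, TwoColoredPerfectMatching χ M) :
    ¬ ∃ X : Finset (Fin 12), X.card = 5 ∧
      ∀ c : Fin 3, ∃ e ⊆ X, e.card = 3 ∧ χ e = c := by
  rintro ⟨X, hX, hrain⟩
  have hYc : (Xᶜ : Finset (Fin 12)).card = 7 := by
    rw [Finset.card_compl, Fintype.card_fin, hX]
  set a : Fin 7 → Fin 12 := fun i => ((Xᶜ).orderIsoOfFin hYc i : Fin 12) with ha
  have inj : Function.Injective a := fun i j hij =>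
    ((Xᶜ).orderIsoOfFin hYc).injective (Subtype.ext hij)
  have hmem : ∀ i, a i ∈ Xᶜ := fun i => ((Xᶜ).orderIsoOfFin hYc i).2
  have hd : ∀ i j : Fin 7, i ≠ j → a i ≠ a j := fun i j hij h => hij (inj h)
  have h1 : χ {a 0, a 1, a 2} = χ {a 0, a 1, a 3} := L5 hH hrain a hd hmem
  have h2 : χ {a 0, a 1, a 3} = χ {a 0, a 1, a 4} :=
    L5 hH hrain (fun i => a (![0, 1, 3, 4, 2, 5, 6] i))
      (fun i j hij h => hd _ _
        (fun h' => hij ((by decide : Function.Injective (![0, 1, 3, 4, 2, 5, 6] : Fin 7 → Fin 7)) h')) h)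
      (fun i => hmem _)
  have h3 : χ {a 0, a 4, a 1} = χ {a 0, a 4, a 5} :=
    L5 hH hrain (fun i => a (![0, 4, 1, 5, 2, 3, 6] i))
      (fun i j hij h => hd _ _
        (fun h' => hij ((by decide : Function.Injective (![0, 4, 1, 5, 2, 3, 6] : Fin 7 → Fin 7)) h')) h)
      (fun i => hmem _)
  have h4 : χ {a 4, a 5, a 0} = χ {a 4, a 5, a 3} :=
    L5 hH hrain (fun i => a (![4, 5, 0, 3, 1, 2, 6] i))
      (fun i j hij h => hd _ _
        (fun h' => hij ((by decide : Function.Injective (![4, 5, 0, 3, 1, 2, 6] : Fin 7 → Fin 7)) h')) h)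
      (fun i => hmem _)
  have e1 : ({a 0, a 1, a 4} : Finset (Fin 12)) = {a 0, a 4, a 1} := by
    ext x; simp only [Finset.mem_insert, Finset.mem_singleton]; tauto
  have e2 : ({a 0, a 4, a 5} : Finset (Fin 12)) = {a 4, a 5, a 0} := by
    ext x; simp only [Finset.mem_insert, Finset.mem_singleton]; tauto
  have final : χ {a 0, a 1, a 2} = χ {a 4, a 5, a 3} := by
    rw [h1, h2, e1, h3, e2, h4]
  exact L1 hH hrain
    (by intro x hx; simp only [Finset.mem_insert, Finset.mem_singleton] at hx
        rcases hx with rfl | rfl | rfl <;> exact hmem _)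
    (by intro x hx; simp only [Finset.mem_insert, Finset.mem_singleton] at hx
        rcases hx with rfl | rfl | rfl <;> exact hmem _)
    (card3' (hd 0 1 (by decide)) (hd 0 2 (by decide)) (hd 1 2 (by decide)))
    (card3' (hd 4 5 (by decide)) (hd 4 3 (by decide)) (hd 5 3 (by decide)))
    (disj3 (hd 0 4 (by decide)) (hd 0 5 (by decide)) (hd 0 3 (by decide))
      (hd 1 4 (by decide)) (hd 1 5 (by decide)) (hd 1 3 (by decide))
      (hd 2 4 (by decide)) (hd 2 5 (by decide)) (hd 2 3 (by decide)))
    final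
end

section
/- Let H be a 3-coloring of the 3-subsets of a 12-element set V with no 2-colored perfect matching. If X₁ and X₂ are distinct 6-element subsets, each with all 3-subsets of one color, intersecting in at most 4 vertices, then the color of X₁ differs from the color of X₂. -/
open Finset


lemma buildPM (χ : Finset (Fin 12) → Fin 3)
    (e₁ e₂ e₃ e₄ : Finset (Fin 12))
    (h₁ : e₁.card = 3) (h₂ : e₂.card = 3) (h₃ : e₃.card = 3) (h₄ : e₄.card = 3)
    (d₁₂ : Disjoint e₁ e₂) (d₁₃ : Disjoint e₁ e₃) (d₁₄ : Disjoint e₁ e₄)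
    (d₂₃ : Disjoint e₂ e₃) (d₂₄ : Disjoint e₂ e₄) (d₃₄ : Disjoint e₃ e₄)
    (hcov : ∀ v : Fin 12, v ∈ e₁ ∨ v ∈ e₂ ∨ v ∈ e₃ ∨ v ∈ e₄)
    (a b : Fin 3)
    (hc₁ : χ e₁ = a ∨ χ e₁ = b) (hc₂ : χ e₂ = a ∨ χ e₂ = b)
    (hc₃ : χ e₃ = a ∨ χ e₃ = b) (hc₄ : χ e₄ = a ∨ χ e₄ = b) :
    ∃ M, TwoColoredPerfectMatching χ M := by
  have key : ∀ s t : Finset (Fin 12), s.card = 3 → Disjoint s t → s ≠ t := by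
    intro s t hs hd h
    subst h
    rw [disjoint_self] at hd
    simp [hd] at hs
  have n12 := key _ _ h₁ d₁₂
  have n13 := key _ _ h₁ d₁₃
  have n14 := key _ _ h₁ d₁₄
  have n23 := key _ _ h₂ d₂₃
  have n24 := key _ _ h₂ d₂₄
  have n34 := key _ _ h₃ d₃₄
  refine ⟨{e₁, e₂, e₃, e₄}, ?_, ?_, ?_, ?_, a, b, ?_⟩
  · rw [card_insert_of_notMem (by simp [n12, n13, n14]),
      card_insert_of_notMem (by simp [n23, n24]),
      card_insert_of_notMem (by simp [n34]), card_singleton]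
  · intro e he
    simp only [mem_insert, mem_singleton] at he
    rcases he with rfl | rfl | rfl | rfl <;> assumption
  · intro e he f hf hne
    simp only [mem_insert, mem_singleton] at he hf
    rcases he with rfl | rfl | rfl | rfl <;> rcases hf with rfl | rfl | rfl | rfl <;>
      first
      | exact absurd rfl hne
      | assumption
      | exact d₁₂.symm
      | exact d₁₃.symm
      | exact d₁₄.symm
      | exact d₂₃.symm
      | exact d₂₄.symm
      | exact d₃₄.symm
  · intro v
    rcases hcov v with h | h | h | h
    · exact ⟨e₁, by simp, h⟩
    · exact ⟨e₂, by simp, h⟩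
    · exact ⟨e₃, by simp, h⟩
    · exact ⟨e₄, by simp, h⟩
  · intro e he
    simp only [mem_insert, mem_singleton] at he
    rcases he with rfl | rfl | rfl | rfl <;> assumption

theorem mono_K6_small_intersection_different_colors (χ : Finset (Fin 12) → Fin 3)
    (hH : ¬ ∃ M, TwoColoredPerfectMatching χ M)
    (X₁ X₂ : Finset (Fin 12)) (c₁ c₂ : Fin 3)
    (hX₁ : X₁.card = 6) (hX₂ : X₂.card = 6)
    (hmono₁ : ∀ e ⊆ X₁, e.card = 3 → χ e = c₁)
    (hmono₂ : ∀ e ⊆ X₂, e.card = 3 → χ e = c₂)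
    (hne : X₁ ≠ X₂) (hint : (X₁ ∩ X₂).card ≤ 4) :
    c₁ ≠ c₂ := by
  intro hcc
  rw [← hcc] at hmono₂
  apply hH
  classical
  set I := X₁ ∩ X₂ with hIdef
  set A := X₁ \ X₂ with hAdef
  set B := X₂ \ X₁ with hBdef
  set O := (X₁ ∪ X₂)ᶜ with hOdef
  have hAI : A.card + I.card = 6 := by
    rw [hAdef, hIdef, card_sdiff_add_card_inter, hX₁]
  have hBI : B.card + I.card = 6 := by
    rw [hBdef, hIdef, inter_comm, card_sdiff_add_card_inter, hX₂]
  have hUI : (X₁ ∪ X₂).card + I.card = 12 := by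
    rw [hIdef, card_union_add_card_inter, hX₁, hX₂]
  have hOc : O.card = I.card := by
    rw [hOdef, card_compl]
    simp only [Fintype.card_fin]
    omega
  have hAX : A ⊆ X₁ := sdiff_subset
  have hBX : B ⊆ X₂ := sdiff_subset
  have hIX1 : I ⊆ X₁ := inter_subset_left
  have hIX2 : I ⊆ X₂ := inter_subset_right
  have dAB : Disjoint A B := by
    rw [hAdef, hBdef, disjoint_left]; intro x hx hx'
    simp only [mem_sdiff] at hx hx'; tauto
  have dAI : Disjoint A I := by
    rw [hAdef, hIdef, disjoint_left]; intro x hx hx'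
    simp only [mem_sdiff] at hx; simp only [mem_inter] at hx'; tauto
  have dBI : Disjoint B I := by
    rw [hBdef, hIdef, disjoint_left]; intro x hx hx'
    simp only [mem_sdiff] at hx; simp only [mem_inter] at hx'; tauto
  have hAU : A ⊆ X₁ ∪ X₂ := hAX.trans subset_union_left
  have hBU : B ⊆ X₁ ∪ X₂ := hBX.trans subset_union_right
  have hIU : I ⊆ X₁ ∪ X₂ := hIX1.trans subset_union_left
  have dOA : Disjoint O A := disjoint_compl_left.mono_right hAU
  have dOB : Disjoint O B := disjoint_compl_left.mono_right hBU
  have dOI : Disjoint O I := disjoint_compl_left.mono_right hIU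
  have hquad : ∀ v : Fin 12, v ∈ O ∨ v ∈ A ∨ v ∈ B ∨ v ∈ I := by
    intro v
    simp only [hOdef, hAdef, hBdef, hIdef, mem_compl, mem_sdiff, mem_union, mem_inter]
    tauto
  by_cases hk : I.card ≤ 3
  · -- small intersection: one free triple suffices
    obtain ⟨A₀, hA₀A, hA₀c⟩ := exists_subset_card_eq (show 3 - I.card ≤ A.card by omega)
    have heC : (O ∪ A₀).card = 3 := by
      rw [card_union_of_disjoint (dOA.mono_right hA₀A)]; omega
    have hfC : (A \ A₀).card = 3 := by rw [card_sdiff_of_subset hA₀A]; omega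
    have hIBc : (I ∪ B).card = 6 := by
      rw [card_union_of_disjoint dBI.symm]; omega
    obtain ⟨g, hgsub, hgc⟩ := exists_subset_card_eq (show 3 ≤ (I ∪ B).card by omega)
    have hhC : ((I ∪ B) \ g).card = 3 := by rw [card_sdiff_of_subset hgsub]; omega
    have hIBX : I ∪ B ⊆ X₂ := union_subset hIX2 hBX
    have dEIB : Disjoint (O ∪ A₀) (I ∪ B) :=
      disjoint_union_left.mpr ⟨disjoint_union_right.mpr ⟨dOI, dOB⟩,
        (disjoint_union_right.mpr ⟨dAI, dAB⟩).mono_left hA₀A⟩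
    have dFIB : Disjoint (A \ A₀) (I ∪ B) :=
      (disjoint_union_right.mpr ⟨dAI, dAB⟩).mono_left sdiff_subset
    refine buildPM χ (O ∪ A₀) (A \ A₀) g ((I ∪ B) \ g) heC hfC hgc hhC
      (disjoint_union_left.mpr ⟨dOA.mono_right sdiff_subset, disjoint_sdiff⟩)
      (dEIB.mono_right hgsub) (dEIB.mono_right sdiff_subset)
      (dFIB.mono_right hgsub) (dFIB.mono_right sdiff_subset)
      disjoint_sdiff ?_ (χ (O ∪ A₀)) c₁ (Or.inl rfl)
      (Or.inr (hmono₁ _ (sdiff_subset.trans hAX) hfC))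
      (Or.inr (hmono₂ _ (hgsub.trans hIBX) hgc))
      (Or.inr (hmono₂ _ (sdiff_subset.trans hIBX) hhC))
    intro v
    rcases hquad v with h | h | h | h
    · exact Or.inl (mem_union_left _ h)
    · by_cases hv : v ∈ A₀
      · exact Or.inl (mem_union_right _ hv)
      · exact Or.inr (Or.inl (mem_sdiff.mpr ⟨h, hv⟩))
    · by_cases hv : v ∈ g
      · exact Or.inr (Or.inr (Or.inl hv))
      · exact Or.inr (Or.inr (Or.inr (mem_sdiff.mpr ⟨mem_union_right _ h, hv⟩)))
    · by_cases hv : v ∈ g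
      · exact Or.inr (Or.inr (Or.inl hv))
      · exact Or.inr (Or.inr (Or.inr (mem_sdiff.mpr ⟨mem_union_left _ h, hv⟩)))
  · -- |I| = 4 : the four-triple argument
    have hk4 : I.card = 4 := by omega
    have hAc : A.card = 2 := by omega
    have hBc : B.card = 2 := by omega
    have hOc4 : O.card = 4 := by omega
    obtain ⟨P₁, hP₁I, hP₁c⟩ := exists_subset_card_eq (show 2 ≤ I.card by omega)
    have hP₂I : I \ P₁ ⊆ I := sdiff_subset
    set P₂ := I \ P₁ with hP₂def
    have hP₂c : P₂.card = 2 := by rw [hP₂def, card_sdiff_of_subset hP₁I]; omega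
    have dP : Disjoint P₁ P₂ := disjoint_sdiff
    have hPU : P₁ ∪ P₂ = I := union_sdiff_of_subset hP₁I
    obtain ⟨o₁, ho₁O⟩ := card_pos.mp (show 0 < O.card by omega)
    have hO'c : (O.erase o₁).card = 3 := by rw [card_erase_of_mem ho₁O]; omega
    obtain ⟨o₂, o₃, o₄, hn23, hn24, hn34, hO'⟩ := card_eq_three.mp hO'c
    have ho₂e : o₂ ∈ O.erase o₁ := by rw [hO']; simp
    have ho₃e : o₃ ∈ O.erase o₁ := by rw [hO']; simp
    have ho₄e : o₄ ∈ O.erase o₁ := by rw [hO']; simp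
    have ho₂O := mem_of_mem_erase ho₂e
    have ho₃O := mem_of_mem_erase ho₃e
    have ho₄O := mem_of_mem_erase ho₄e
    have hn21 : o₂ ≠ o₁ := ne_of_mem_erase ho₂e
    have hn31 : o₃ ≠ o₁ := ne_of_mem_erase ho₃e
    have hn41 : o₄ ≠ o₁ := ne_of_mem_erase ho₄e
    have hOeq : O = insert o₁ {o₂, o₃, o₄} := by rw [← hO', insert_erase ho₁O]
    have notI : ∀ x ∈ O, x ∉ I := fun x hx h => disjoint_left.mp dOI hx h
    have notA : ∀ x ∈ O, x ∉ A := fun x hx h => disjoint_left.mp dOA hx h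
    have notB : ∀ x ∈ O, x ∉ B := fun x hx h => disjoint_left.mp dOB hx h
    have notO : ∀ x ∈ I, x ∉ O := fun x hx h => disjoint_left.mp dOI h hx
    have notAI : ∀ x ∈ I, x ∉ A := fun x hx h => disjoint_left.mp dAI h hx
    have notBI : ∀ x ∈ I, x ∉ B := fun x hx h => disjoint_left.mp dBI h hx
    have nmem : ∀ {x y : Fin 12} {S : Finset (Fin 12)}, x ≠ y → x ∉ S → x ∉ insert y S := by
      intro x y S h1 h2 h
      rcases mem_insert.mp h with rfl | h
      · exact h1 rfl
      · exact h2 h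
    have h234O : ({o₂, o₃, o₄} : Finset (Fin 12)) ⊆ O := by
      intro x hx
      simp only [mem_insert, mem_singleton] at hx
      rcases hx with rfl | rfl | rfl <;> assumption
    have h134O : ({o₁, o₃, o₄} : Finset (Fin 12)) ⊆ O := by
      intro x hx
      simp only [mem_insert, mem_singleton] at hx
      rcases hx with rfl | rfl | rfl <;> assumption
    have h124O : ({o₁, o₂, o₄} : Finset (Fin 12)) ⊆ O := by
      intro x hx
      simp only [mem_insert, mem_singleton] at hx
      rcases hx with rfl | rfl | rfl <;> assumption
    have h123O : ({o₁, o₂, o₃} : Finset (Fin 12)) ⊆ O := by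
      intro x hx
      simp only [mem_insert, mem_singleton] at hx
      rcases hx with rfl | rfl | rfl <;> assumption
    have c234 : ({o₂, o₃, o₄} : Finset (Fin 12)).card = 3 :=
      card_eq_three.mpr ⟨_, _, _, hn23, hn24, hn34, rfl⟩
    have c134 : ({o₁, o₃, o₄} : Finset (Fin 12)).card = 3 :=
      card_eq_three.mpr ⟨_, _, _, hn31.symm, hn41.symm, hn34, rfl⟩
    have c124 : ({o₁, o₂, o₄} : Finset (Fin 12)).card = 3 :=
      card_eq_three.mpr ⟨_, _, _, hn21.symm, hn41.symm, hn24, rfl⟩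
    have c123 : ({o₁, o₂, o₃} : Finset (Fin 12)).card = 3 :=
      card_eq_three.mpr ⟨_, _, _, hn21.symm, hn31.symm, hn23, rfl⟩
    have hIBc : (I ∪ B).card = 6 := by rw [card_union_of_disjoint dBI.symm]; omega
    have hIAc : (I ∪ A).card = 6 := by rw [card_union_of_disjoint dAI.symm]; omega
    have hIBX : I ∪ B ⊆ X₂ := union_subset hIX2 hBX
    have hIAX : I ∪ A ⊆ X₁ := union_subset hIX1 hAX
    have cT₁ : (insert o₁ P₁).card = 3 := by
      rw [card_insert_of_notMem (fun h => notI o₁ ho₁O (hP₁I h))]; omega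
    have cT₂ : (insert o₂ P₂).card = 3 := by
      rw [card_insert_of_notMem (fun h => notI o₂ ho₂O (hP₂I h))]; omega
    have cT₃ : (insert o₃ A).card = 3 := by
      rw [card_insert_of_notMem (notA o₃ ho₃O)]; omega
    have cT₄ : (insert o₄ B).card = 3 := by
      rw [card_insert_of_notMem (notB o₄ ho₄O)]; omega
    by_cases ht3 : χ (insert o₃ A) = c₁
    · -- use T₃ together with {o₁,o₂,o₄} and a split of I ∪ B
      obtain ⟨g, hgsub, hgc⟩ := exists_subset_card_eq (show 3 ≤ (I ∪ B).card by omega)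
      have hhC : ((I ∪ B) \ g).card = 3 := by rw [card_sdiff_of_subset hgsub]; omega
      have dT₃IB : Disjoint (insert o₃ A) (I ∪ B) :=
        disjoint_insert_left.mpr ⟨by
          simp only [mem_union]
          push_neg
          exact ⟨notI o₃ ho₃O, notB o₃ ho₃O⟩,
          disjoint_union_right.mpr ⟨dAI, dAB⟩⟩
      have d124IB : Disjoint ({o₁, o₂, o₄} : Finset (Fin 12)) (I ∪ B) :=
        (disjoint_union_right.mpr ⟨dOI, dOB⟩).mono_left h124O
      refine buildPM χ (insert o₃ A) {o₁, o₂, o₄} g ((I ∪ B) \ g) cT₃ c124 hgc hhC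
        (disjoint_insert_left.mpr ⟨nmem hn31 (nmem hn23.symm (notMem_singleton.mpr hn34)),
          (dOA.symm).mono_right h124O⟩)
        (dT₃IB.mono_right hgsub) (dT₃IB.mono_right sdiff_subset)
        (d124IB.mono_right hgsub) (d124IB.mono_right sdiff_subset)
        disjoint_sdiff ?_ (χ ({o₁, o₂, o₄} : Finset (Fin 12))) c₁
        (Or.inr ht3) (Or.inl rfl)
        (Or.inr (hmono₂ _ (hgsub.trans hIBX) hgc))
        (Or.inr (hmono₂ _ (sdiff_subset.trans hIBX) hhC))
      intro v
      rcases hquad v with h | h | h | h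
      · rw [hOeq] at h
        simp only [mem_insert, mem_singleton] at h
        rcases h with rfl | rfl | rfl | rfl
        · exact Or.inr (Or.inl (by simp))
        · exact Or.inr (Or.inl (by simp))
        · exact Or.inl (mem_insert_self _ _)
        · exact Or.inr (Or.inl (by simp))
      · exact Or.inl (mem_insert_of_mem h)
      · by_cases hv : v ∈ g
        · exact Or.inr (Or.inr (Or.inl hv))
        · exact Or.inr (Or.inr (Or.inr (mem_sdiff.mpr ⟨mem_union_right _ h, hv⟩)))
      · by_cases hv : v ∈ g
        · exact Or.inr (Or.inr (Or.inl hv))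
        · exact Or.inr (Or.inr (Or.inr (mem_sdiff.mpr ⟨mem_union_left _ h, hv⟩)))
    by_cases ht4 : χ (insert o₄ B) = c₁
    · -- use T₄ together with {o₁,o₂,o₃} and a split of I ∪ A
      obtain ⟨g, hgsub, hgc⟩ := exists_subset_card_eq (show 3 ≤ (I ∪ A).card by omega)
      have hhC : ((I ∪ A) \ g).card = 3 := by rw [card_sdiff_of_subset hgsub]; omega
      have dT₄IA : Disjoint (insert o₄ B) (I ∪ A) :=
        disjoint_insert_left.mpr ⟨by
          simp only [mem_union]
          push_neg
          exact ⟨notI o₄ ho₄O, notA o₄ ho₄O⟩,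
          disjoint_union_right.mpr ⟨dBI, dAB.symm⟩⟩
      have d123IA : Disjoint ({o₁, o₂, o₃} : Finset (Fin 12)) (I ∪ A) :=
        (disjoint_union_right.mpr ⟨dOI, dOA⟩).mono_left h123O
      refine buildPM χ (insert o₄ B) {o₁, o₂, o₃} g ((I ∪ A) \ g) cT₄ c123 hgc hhC
        (disjoint_insert_left.mpr ⟨nmem hn41 (nmem hn24.symm (notMem_singleton.mpr hn34.symm)),
          (dOB.symm).mono_right h123O⟩)
        (dT₄IA.mono_right hgsub) (dT₄IA.mono_right sdiff_subset)
        (d123IA.mono_right hgsub) (d123IA.mono_right sdiff_subset)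
        disjoint_sdiff ?_ (χ ({o₁, o₂, o₃} : Finset (Fin 12))) c₁
        (Or.inr ht4) (Or.inl rfl)
        (Or.inr (hmono₁ _ (hgsub.trans hIAX) hgc))
        (Or.inr (hmono₁ _ (sdiff_subset.trans hIAX) hhC))
      intro v
      rcases hquad v with h | h | h | h
      · rw [hOeq] at h
        simp only [mem_insert, mem_singleton] at h
        rcases h with rfl | rfl | rfl | rfl
        · exact Or.inr (Or.inl (by simp))
        · exact Or.inr (Or.inl (by simp))
        · exact Or.inr (Or.inl (by simp))
        · exact Or.inl (mem_insert_self _ _)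
      · by_cases hv : v ∈ g
        · exact Or.inr (Or.inr (Or.inl hv))
        · exact Or.inr (Or.inr (Or.inr (mem_sdiff.mpr ⟨mem_union_right _ h, hv⟩)))
      · exact Or.inl (mem_insert_of_mem h)
      · by_cases hv : v ∈ g
        · exact Or.inr (Or.inr (Or.inl hv))
        · exact Or.inr (Or.inr (Or.inr (mem_sdiff.mpr ⟨mem_union_left _ h, hv⟩)))
    by_cases ht1 : χ (insert o₁ P₁) = c₁
    · -- use T₁, {o₂,o₃,o₄}, insert p A, insert q B where P₂ = {p,q}
      obtain ⟨p, q, hpq, hP₂eq⟩ := card_eq_two.mp hP₂c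
      have hp : p ∈ P₂ := by rw [hP₂eq]; simp
      have hq : q ∈ P₂ := by rw [hP₂eq]; simp
      have hpI : p ∈ I := hP₂I hp
      have hqI : q ∈ I := hP₂I hq
      have hpP₁ : p ∉ P₁ := (mem_sdiff.mp hp).2
      have hqP₁ : q ∉ P₁ := (mem_sdiff.mp hq).2
      have cpA : (insert p A).card = 3 := by
        rw [card_insert_of_notMem (notAI p hpI)]; omega
      have cqB : (insert q B).card = 3 := by
        rw [card_insert_of_notMem (notBI q hqI)]; omega
      refine buildPM χ (insert o₁ P₁) {o₂, o₃, o₄} (insert p A) (insert q B)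
        cT₁ c234 cpA cqB
        (disjoint_insert_left.mpr ⟨nmem hn21.symm (nmem hn31.symm (notMem_singleton.mpr hn41.symm)),
          ((dOI.symm).mono_left hP₁I).mono_right h234O⟩)
        (disjoint_insert_left.mpr ⟨nmem (fun h => notI o₁ ho₁O (h ▸ hpI)) (notA o₁ ho₁O),
          disjoint_insert_right.mpr ⟨hpP₁, (dAI.symm).mono_left hP₁I⟩⟩)
        (disjoint_insert_left.mpr ⟨nmem (fun h => notI o₁ ho₁O (h ▸ hqI)) (notB o₁ ho₁O),
          disjoint_insert_right.mpr ⟨hqP₁, (dBI.symm).mono_left hP₁I⟩⟩)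
        (disjoint_insert_right.mpr ⟨fun h => notO p hpI (h234O h), (dOA.mono_left h234O)⟩)
        (disjoint_insert_right.mpr ⟨fun h => notO q hqI (h234O h), (dOB.mono_left h234O)⟩)
        (disjoint_insert_left.mpr ⟨nmem hpq (notBI p hpI),
          disjoint_insert_right.mpr ⟨notAI q hqI, dAB⟩⟩)
        ?_ (χ ({o₂, o₃, o₄} : Finset (Fin 12))) c₁
        (Or.inr ht1) (Or.inl rfl)
        (Or.inr (hmono₁ _ (insert_subset (hIX1 hpI) hAX) cpA))
        (Or.inr (hmono₂ _ (insert_subset (hIX2 hqI) hBX) cqB))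
      intro v
      rcases hquad v with h | h | h | h
      · rw [hOeq] at h
        simp only [mem_insert, mem_singleton] at h
        rcases h with rfl | rfl | rfl | rfl
        · exact Or.inl (mem_insert_self _ _)
        · exact Or.inr (Or.inl (by simp))
        · exact Or.inr (Or.inl (by simp))
        · exact Or.inr (Or.inl (by simp))
      · exact Or.inr (Or.inr (Or.inl (mem_insert_of_mem h)))
      · exact Or.inr (Or.inr (Or.inr (mem_insert_of_mem h)))
      · rw [← hPU] at h
        rcases mem_union.mp h with h | h
        · exact Or.inl (mem_insert_of_mem h)
        · rw [hP₂eq] at h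
          simp only [mem_insert, mem_singleton] at h
          rcases h with rfl | rfl
          · exact Or.inr (Or.inr (Or.inl (mem_insert_self _ _)))
          · exact Or.inr (Or.inr (Or.inr (mem_insert_self _ _)))
    by_cases ht2 : χ (insert o₂ P₂) = c₁
    · -- use T₂, {o₁,o₃,o₄}, insert p A, insert q B where P₁ = {p,q}
      obtain ⟨p, q, hpq, hP₁eq⟩ := card_eq_two.mp hP₁c
      have hp : p ∈ P₁ := by rw [hP₁eq]; simp
      have hq : q ∈ P₁ := by rw [hP₁eq]; simp
      have hpI : p ∈ I := hP₁I hp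
      have hqI : q ∈ I := hP₁I hq
      have hpP₂ : p ∉ P₂ := fun h => (mem_sdiff.mp h).2 hp
      have hqP₂ : q ∉ P₂ := fun h => (mem_sdiff.mp h).2 hq
      have cpA : (insert p A).card = 3 := by
        rw [card_insert_of_notMem (notAI p hpI)]; omega
      have cqB : (insert q B).card = 3 := by
        rw [card_insert_of_notMem (notBI q hqI)]; omega
      refine buildPM χ (insert o₂ P₂) {o₁, o₃, o₄} (insert p A) (insert q B)
        cT₂ c134 cpA cqB
        (disjoint_insert_left.mpr ⟨nmem hn21 (nmem hn23 (notMem_singleton.mpr hn24)),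
          ((dOI.symm).mono_left hP₂I).mono_right h134O⟩)
        (disjoint_insert_left.mpr ⟨nmem (fun h => notI o₂ ho₂O (h ▸ hpI)) (notA o₂ ho₂O),
          disjoint_insert_right.mpr ⟨hpP₂, (dAI.symm).mono_left hP₂I⟩⟩)
        (disjoint_insert_left.mpr ⟨nmem (fun h => notI o₂ ho₂O (h ▸ hqI)) (notB o₂ ho₂O),
          disjoint_insert_right.mpr ⟨hqP₂, (dBI.symm).mono_left hP₂I⟩⟩)
        (disjoint_insert_right.mpr ⟨fun h => notO p hpI (h134O h), (dOA.mono_left h134O)⟩)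
        (disjoint_insert_right.mpr ⟨fun h => notO q hqI (h134O h), (dOB.mono_left h134O)⟩)
        (disjoint_insert_left.mpr ⟨nmem hpq (notBI p hpI),
          disjoint_insert_right.mpr ⟨notAI q hqI, dAB⟩⟩)
        ?_ (χ ({o₁, o₃, o₄} : Finset (Fin 12))) c₁
        (Or.inr ht2) (Or.inl rfl)
        (Or.inr (hmono₁ _ (insert_subset (hIX1 hpI) hAX) cpA))
        (Or.inr (hmono₂ _ (insert_subset (hIX2 hqI) hBX) cqB))
      intro v
      rcases hquad v with h | h | h | h
      · rw [hOeq] at h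
        simp only [mem_insert, mem_singleton] at h
        rcases h with rfl | rfl | rfl | rfl
        · exact Or.inr (Or.inl (by simp))
        · exact Or.inl (mem_insert_self _ _)
        · exact Or.inr (Or.inl (by simp))
        · exact Or.inr (Or.inl (by simp))
      · exact Or.inr (Or.inr (Or.inl (mem_insert_of_mem h)))
      · exact Or.inr (Or.inr (Or.inr (mem_insert_of_mem h)))
      · rw [← hPU] at h
        rcases mem_union.mp h with h | h
        · rw [hP₁eq] at h
          simp only [mem_insert, mem_singleton] at h
          rcases h with rfl | rfl
          · exact Or.inr (Or.inr (Or.inl (mem_insert_self _ _)))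
          · exact Or.inr (Or.inr (Or.inr (mem_insert_self _ _)))
        · exact Or.inl (mem_insert_of_mem h)
    · -- no Tᵢ has color c₁ : {T₁,T₂,T₃,T₄} is itself 2-colored
      obtain ⟨d₁, d₂, hd⟩ :=
        (show ∀ c : Fin 3, ∃ d₁ d₂ : Fin 3, ∀ x : Fin 3, x ≠ c → x = d₁ ∨ x = d₂ by decide) c₁
      refine buildPM χ (insert o₁ P₁) (insert o₂ P₂) (insert o₃ A) (insert o₄ B)
        cT₁ cT₂ cT₃ cT₄
        (disjoint_insert_left.mpr ⟨nmem hn21.symm (fun h => notI o₁ ho₁O (hP₂I h)),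
          disjoint_insert_right.mpr ⟨fun h => notI o₂ ho₂O (hP₁I h), dP⟩⟩)
        (disjoint_insert_left.mpr ⟨nmem hn31.symm (notA o₁ ho₁O),
          disjoint_insert_right.mpr ⟨fun h => notI o₃ ho₃O (hP₁I h), (dAI.symm).mono_left hP₁I⟩⟩)
        (disjoint_insert_left.mpr ⟨nmem hn41.symm (notB o₁ ho₁O),
          disjoint_insert_right.mpr ⟨fun h => notI o₄ ho₄O (hP₁I h), (dBI.symm).mono_left hP₁I⟩⟩)
        (disjoint_insert_left.mpr ⟨nmem hn23 (notA o₂ ho₂O),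
          disjoint_insert_right.mpr ⟨fun h => notI o₃ ho₃O (hP₂I h), (dAI.symm).mono_left hP₂I⟩⟩)
        (disjoint_insert_left.mpr ⟨nmem hn24 (notB o₂ ho₂O),
          disjoint_insert_right.mpr ⟨fun h => notI o₄ ho₄O (hP₂I h), (dBI.symm).mono_left hP₂I⟩⟩)
        (disjoint_insert_left.mpr ⟨nmem hn34 (notB o₃ ho₃O),
          disjoint_insert_right.mpr ⟨notA o₄ ho₄O, dAB⟩⟩)
        ?_ d₁ d₂ (hd _ ht1) (hd _ ht2) (hd _ ht3) (hd _ ht4)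
      intro v
      rcases hquad v with h | h | h | h
      · rw [hOeq] at h
        simp only [mem_insert, mem_singleton] at h
        rcases h with rfl | rfl | rfl | rfl
        · exact Or.inl (mem_insert_self _ _)
        · exact Or.inr (Or.inl (mem_insert_self _ _))
        · exact Or.inr (Or.inr (Or.inl (mem_insert_self _ _)))
        · exact Or.inr (Or.inr (Or.inr (mem_insert_self _ _)))
      · exact Or.inr (Or.inr (Or.inl (mem_insert_of_mem h)))
      · exact Or.inr (Or.inr (Or.inr (mem_insert_of_mem h)))
      · rw [← hPU] at h
        rcases mem_union.mp h with h | h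
        · exact Or.inl (mem_insert_of_mem h)
        · exact Or.inr (Or.inl (mem_insert_of_mem h))
end

section
/- Let H be a 3-coloring of the 3-subsets of a 12-element set V with no 2-colored perfect matching. If X₁ and X₂ are 6-element subsets all of whose 3-subsets are monochromatic in color c₁ and c₂ respectively, with c₁ ≠ c₂, then |X₁ ∩ X₂| = 2. -/
/-!
A common triple of `X₁` and `X₂` would get both colours, so `|X₁ ∩ X₂| ≤ 2`. If `X₁` and `X₂`
are disjoint, splitting each into two triples gives a perfect matching in the colours `c₁, c₂`.

If they share exactly one vertex, label it `0`, the rest of `X₁` as `1, …, 5`, the rest of `X₂`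
as `6, …, 10`, and the remaining vertex `11`. A triple `{11, a, a'}` with `a, a'` both in
`1, …, 5` (or both in `6, …, 10`) gets the third colour, since the other eight vertices split into
triples of colours `c₁, c₂`. Hence two disjoint triples `P`, `Q`, with `P` of type `1–5, 1–5, 6–10`
and `Q` of type `1–5, 6–10, 6–10`, are coloured `c₁, c₂` in some order: the remaining four
vertices `i, j ∈ 1–5`, `k, l ∈ 6–10` complete `P, Q` to the perfect matchings with
`{11, i, j}, {0, k, l}` and with `{11, k, l}, {0, i, j}`. Chaining this, all triples of the first
type share one colour and all of the second type the other, and then the two perfect matchings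
`{0,1,6}, {2,3,7}, {4,5,8}, {9,10,11}` and `{0,1,6}, {2,7,8}, {3,9,10}, {4,5,11}` force
`{0, 1, 6}` to have both colours.
-/

open Finset

def IsMonochromatic {α β : Type*} (χ : Finset α → β) (X : Finset α) (c : β) : Prop :=
  ∀ e ⊆ X, e.card = 3 → χ e = c

/-- Covering `Fin 12` is automatic, by counting. -/
abbrev IsTriplePartition (T₁ T₂ T₃ T₄ : Finset (Fin 12)) : Prop :=
  T₁.card = 3 ∧ T₂.card = 3 ∧ T₃.card = 3 ∧ T₄.card = 3 ∧
    Disjoint T₁ T₂ ∧ Disjoint T₁ T₃ ∧ Disjoint T₁ T₄ ∧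
    Disjoint T₂ T₃ ∧ Disjoint T₂ T₄ ∧ Disjoint T₃ T₄

theorem IsTriplePartition.forall_color_eq {χ : Finset (Fin 12) → Fin 3}
    (hH : ¬ ∃ M, TwoColoredPerfectMatching χ M) {T₁ T₂ T₃ T₄ : Finset (Fin 12)}
    (hT : IsTriplePartition T₁ T₂ T₃ T₄) (c : Fin 3) :
    c = χ T₁ ∨ c = χ T₂ ∨ c = χ T₃ ∨ c = χ T₄ := by
  obtain ⟨h₁, h₂, h₃, h₄, d₁₂, d₁₃, d₁₄, d₂₃, d₂₄, d₃₄⟩ := hT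
  have hne : ∀ {s t : Finset (Fin 12)}, s.card = 3 → Disjoint s t → s ≠ t := by
    rintro s t hs hst rfl
    simp_all
  have hunion : T₁ ∪ T₂ ∪ T₃ ∪ T₄ = univ := by
    apply eq_univ_of_card
    rw [card_union_of_disjoint (disjoint_union_left.2 ⟨disjoint_union_left.2 ⟨d₁₄, d₂₄⟩, d₃₄⟩),
      card_union_of_disjoint (disjoint_union_left.2 ⟨d₁₃, d₂₃⟩), card_union_of_disjoint d₁₂]
    simp [h₁, h₂, h₃, h₄]
  by_contra! hc
  refine hH ⟨{T₁, T₂, T₃, T₄}, ?_, ?_, ?_, fun x => ?_, c + 1, c + 2, ?_⟩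
  · rw [card_insert_of_notMem (by simp [hne h₁ d₁₂, hne h₁ d₁₃, hne h₁ d₁₄]),
      card_insert_of_notMem (by simp [hne h₂ d₂₃, hne h₂ d₂₄]), card_pair (hne h₃ d₃₄)]
  · simp [h₁, h₂, h₃, h₄]
  · simp only [mem_insert, mem_singleton]
    rintro e (rfl | rfl | rfl | rfl) f (rfl | rfl | rfl | rfl) hef <;>
      first | exact absurd rfl hef | assumption | exact Disjoint.symm ‹_›
  · have hx : x ∈ T₁ ∪ T₂ ∪ T₃ ∪ T₄ := hunion ▸ mem_univ x
    simp only [mem_union] at hx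
    simp only [mem_insert, mem_singleton, exists_eq_or_imp, exists_eq_left]
    rcases hx with ((hx | hx) | hx) | hx <;> simp [hx]
  · simp only [mem_insert, mem_singleton, forall_eq_or_imp, forall_eq]
    omega

theorem IsTriplePartition.color_ne_of_two_colored {χ : Finset (Fin 12) → Fin 3}
    (hH : ¬ ∃ M, TwoColoredPerfectMatching χ M) {T₁ T₂ T₃ T₄ : Finset (Fin 12)}
    (hT : IsTriplePartition T₁ T₂ T₃ T₄) {a b : Fin 3} (h₂ : χ T₂ = a ∨ χ T₂ = b)
    (h₃ : χ T₃ = a ∨ χ T₃ = b) (h₄ : χ T₄ = a ∨ χ T₄ = b) : χ T₁ ≠ a ∧ χ T₁ ≠ b := by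
  have := hT.forall_color_eq hH (a + 1)
  have := hT.forall_color_eq hH (a + 2)
  omega

theorem TwoColoredPerfectMatching.image {χ : Finset (Fin 12) → Fin 3} {f : Fin 12 → Fin 12}
    (hf : Function.Bijective f) {M : Finset (Finset (Fin 12))}
    (hM : TwoColoredPerfectMatching (fun e => χ (e.image f)) M) :
    TwoColoredPerfectMatching χ (M.image (Finset.image f)) := by
  obtain ⟨hcard, h3, hdisj, hcov, c, c', hcol⟩ := hM
  refine ⟨?_, ?_, ?_, fun u => ?_, c, c', ?_⟩
  · rwa [card_image_of_injective _ (image_injective hf.injective)]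
  · simpa [card_image_of_injective _ hf.injective] using h3
  · simp only [mem_image]
    rintro _ ⟨e, he, rfl⟩ _ ⟨e', he', rfl⟩ hne
    exact (disjoint_image hf.injective).2 (hdisj e he e' he' (by rintro rfl; exact hne rfl))
  · obtain ⟨x, rfl⟩ := hf.surjective u
    obtain ⟨e, he, hx⟩ := hcov x
    exact ⟨e.image f, mem_image_of_mem _ he, mem_image_of_mem f hx⟩
  · simpa using hcol

theorem card_inter_le_two_of_monochromatic {α β : Type*} [DecidableEq α] {χ : Finset α → β}
    {X₁ X₂ : Finset α} {c₁ c₂ : β}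
    (hmono₁ : IsMonochromatic χ X₁ c₁) (hmono₂ : IsMonochromatic χ X₂ c₂)
    (hc : c₁ ≠ c₂) : (X₁ ∩ X₂).card ≤ 2 := by
  by_contra! h
  obtain ⟨e, he, he3⟩ := exists_subset_card_eq (show 3 ≤ (X₁ ∩ X₂).card by omega)
  exact hc ((hmono₁ e (he.trans inter_subset_left) he3).symm.trans
    (hmono₂ e (he.trans inter_subset_right) he3))

theorem not_disjoint_of_monochromatic {χ : Finset (Fin 12) → Fin 3}
    (hH : ¬ ∃ M, TwoColoredPerfectMatching χ M) {X₁ X₂ : Finset (Fin 12)} {c₁ c₂ : Fin 3}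
    (hX₁ : X₁.card = 6) (hX₂ : X₂.card = 6)
    (hmono₁ : IsMonochromatic χ X₁ c₁) (hmono₂ : IsMonochromatic χ X₂ c₂) :
    ¬ Disjoint X₁ X₂ := by
  intro hX
  obtain ⟨t₁, ht₁, ht₁3⟩ := exists_subset_card_eq (show 3 ≤ X₁.card by omega)
  obtain ⟨t₂, ht₂, ht₂3⟩ := exists_subset_card_eq (show 3 ≤ X₂.card by omega)
  have hs₁ : (X₁ \ t₁).card = 3 := by rw [card_sdiff_of_subset ht₁]; omega
  have hs₂ : (X₂ \ t₂).card = 3 := by rw [card_sdiff_of_subset ht₂]; omega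
  have hT : IsTriplePartition t₁ (X₁ \ t₁) t₂ (X₂ \ t₂) :=
    ⟨ht₁3, hs₁, ht₂3, hs₂, disjoint_sdiff, hX.mono ht₁ ht₂, hX.mono ht₁ sdiff_subset,
      hX.mono sdiff_subset ht₂, hX.mono sdiff_subset sdiff_subset, disjoint_sdiff⟩
  exact (hT.color_ne_of_two_colored hH (.inl (hmono₁ _ sdiff_subset hs₁))
    (.inr (hmono₂ t₂ ht₂ ht₂3)) (.inr (hmono₂ _ sdiff_subset hs₂))).1 (hmono₁ t₁ ht₁ ht₁3)

section Template

/-! Vertices labelled as in the header: `X₁ = {0, …, 5}`, `X₂ = {0, 6, …, 10}`, and `11` lies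
outside both. -/

variable {χ : Finset (Fin 12) → Fin 3} {c₁ c₂ : Fin 3}

theorem color_insert_eleven_ne_left (hH : ¬ ∃ M, TwoColoredPerfectMatching χ M)
    (h₁ : IsMonochromatic χ {0, 1, 2, 3, 4, 5} c₁)
    (h₂ : IsMonochromatic χ {0, 6, 7, 8, 9, 10} c₂) :
    ∀ i ∈ ({1, 2, 3, 4, 5} : Finset (Fin 12)), ∀ j ∈ ({1, 2, 3, 4, 5} : Finset (Fin 12)), i ≠ j →
      χ {11, i, j} ≠ c₁ ∧ χ {11, i, j} ≠ c₂ := by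
  intro i hi j hj hij
  have hT : IsTriplePartition {11, i, j} ({1, 2, 3, 4, 5} \ {i, j}) {0, 6, 7} {8, 9, 10} := by
    revert i j; decide
  exact hT.color_ne_of_two_colored hH (.inl (h₁ _ (sdiff_subset.trans (by decide)) hT.2.1))
    (.inr (h₂ _ (by decide) (by decide))) (.inr (h₂ _ (by decide) (by decide)))

theorem color_insert_eleven_ne_right (hH : ¬ ∃ M, TwoColoredPerfectMatching χ M)
    (h₁ : IsMonochromatic χ {0, 1, 2, 3, 4, 5} c₁)
    (h₂ : IsMonochromatic χ {0, 6, 7, 8, 9, 10} c₂) :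
    ∀ k ∈ ({6, 7, 8, 9, 10} : Finset (Fin 12)), ∀ l ∈ ({6, 7, 8, 9, 10} : Finset (Fin 12)),
      k ≠ l → χ {11, k, l} ≠ c₁ ∧ χ {11, k, l} ≠ c₂ := by
  intro k hk l hl hkl
  have hT : IsTriplePartition {11, k, l} ({6, 7, 8, 9, 10} \ {k, l}) {0, 1, 2} {3, 4, 5} := by
    revert k l; decide
  exact hT.color_ne_of_two_colored hH (.inr (h₂ _ (sdiff_subset.trans (by decide)) hT.2.1))
    (.inl (h₁ _ (by decide) (by decide))) (.inl (h₁ _ (by decide) (by decide)))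

theorem colors_of_crossing_pair (hH : ¬ ∃ M, TwoColoredPerfectMatching χ M)
    (h₁ : IsMonochromatic χ {0, 1, 2, 3, 4, 5} c₁)
    (h₂ : IsMonochromatic χ {0, 6, 7, 8, 9, 10} c₂)
    (hc : c₁ ≠ c₂) (P Q : Finset (Fin 12)) (i j k l : Fin 12)
    (hij : i ∈ ({1, 2, 3, 4, 5} : Finset (Fin 12)) ∧ j ∈ ({1, 2, 3, 4, 5} : Finset (Fin 12)) ∧
      i ≠ j := by decide)
    (hkl : k ∈ ({6, 7, 8, 9, 10} : Finset (Fin 12)) ∧ l ∈ ({6, 7, 8, 9, 10} : Finset (Fin 12)) ∧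
      k ≠ l := by decide)
    (hR : IsTriplePartition P Q {11, i, j} {0, k, l} := by decide)
    (hS : IsTriplePartition P Q {11, k, l} {0, i, j} := by decide) :
    χ P = c₁ ∧ χ Q = c₂ ∨ χ P = c₂ ∧ χ Q = c₁ := by
  obtain ⟨hi, hj, hij⟩ := hij
  obtain ⟨hk, hl, hkl⟩ := hkl
  have hout₁ := color_insert_eleven_ne_left hH h₁ h₂ i hi j hj hij
  have hout₂ := color_insert_eleven_ne_right hH h₁ h₂ k hk l hl hkl
  have hin₁ : χ {0, i, j} = c₁ :=
    h₁ _ (insert_subset_insert 0 (insert_subset hi (singleton_subset_iff.2 hj))) hS.2.2.2.1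
  have hin₂ : χ {0, k, l} = c₂ :=
    h₂ _ (insert_subset_insert 0 (insert_subset hk (singleton_subset_iff.2 hl))) hR.2.2.2.1
  have := hR.forall_color_eq hH c₁
  have := hS.forall_color_eq hH c₂
  omega

theorem false_of_monochromatic_template (hH : ¬ ∃ M, TwoColoredPerfectMatching χ M)
    (h₁ : IsMonochromatic χ {0, 1, 2, 3, 4, 5} c₁)
    (h₂ : IsMonochromatic χ {0, 6, 7, 8, 9, 10} c₂)
    (hc : c₁ ≠ c₂) : False := by
  have hPQ := colors_of_crossing_pair hH h₁ h₂ hc {4, 5, 6} {1, 9, 10} 2 3 7 8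
  have hP₁ := colors_of_crossing_pair hH h₁ h₂ hc {2, 3, 7} {1, 9, 10} 4 5 6 8
  have hP₂ := colors_of_crossing_pair hH h₁ h₂ hc {4, 5, 8} {1, 9, 10} 2 3 6 7
  have hQ₁ := colors_of_crossing_pair hH h₁ h₂ hc {4, 5, 6} {2, 7, 8} 1 3 9 10
  have hQ₂ := colors_of_crossing_pair hH h₁ h₂ hc {4, 5, 6} {3, 9, 10} 1 2 7 8
  have hP₁P : χ {2, 3, 7} = χ {4, 5, 6} := by omega
  have hP₂P : χ {4, 5, 8} = χ {4, 5, 6} := by omega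
  have hQ₁Q : χ {2, 7, 8} = χ {1, 9, 10} := by omega
  have hQ₂Q : χ {3, 9, 10} = χ {1, 9, 10} := by omega
  have hR₁ := color_insert_eleven_ne_right hH h₁ h₂ 9 (by decide) 10 (by decide) (by decide)
  have hR₂ := color_insert_eleven_ne_left hH h₁ h₂ 4 (by decide) 5 (by decide) (by decide)
  have hM₁ := (show IsTriplePartition {0, 1, 6} {2, 3, 7} {4, 5, 8} {11, 9, 10} by
    decide).forall_color_eq hH (χ {1, 9, 10})
  have hM₂ := (show IsTriplePartition {0, 1, 6} {2, 7, 8} {3, 9, 10} {11, 4, 5} by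
    decide).forall_color_eq hH (χ {4, 5, 6})
  omega

end Template

theorem exists_injective_mapsTo_of_card_inter_eq_one {X₁ X₂ : Finset (Fin 12)} (hX₁ : X₁.card = 6)
    (hX₂ : X₂.card = 6) (h : (X₁ ∩ X₂).card = 1) :
    ∃ g : Fin 12 → Fin 12, Function.Injective g ∧
      (∀ i ∈ ({0, 1, 2, 3, 4, 5} : Finset (Fin 12)), g i ∈ X₁) ∧
      ∀ i ∈ ({0, 6, 7, 8, 9, 10} : Finset (Fin 12)), g i ∈ X₂ := by
  obtain ⟨w, hw⟩ := card_eq_one.1 h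
  have hwX : w ∈ X₁ ∧ w ∈ X₂ := mem_inter.1 (hw ▸ mem_singleton_self w)
  have hA : (X₁ \ X₂).card = 5 := by rw [card_sdiff, inter_comm, h, hX₁]
  have hB : (X₂ \ X₁).card = 5 := by rw [card_sdiff, h, hX₂]
  obtain ⟨v, hv⟩ : ∃ v, v ∉ X₁ ∪ X₂ := by
    by_contra! hall
    have := card_union_add_card_inter X₁ X₂
    rw [eq_univ_of_forall hall, card_univ, Fintype.card_fin] at this
    omega
  set eA := (X₁ \ X₂).orderEmbOfFin hA
  set eB := (X₂ \ X₁).orderEmbOfFin hB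
  set u : Fin 6 → Fin 12 := Fin.cons w eA with hu_def
  set y : Fin 6 → Fin 12 := Fin.snoc eB v with hy_def
  have hu : ∀ i, u i ∈ X₁ := Fin.cases hwX.1 fun i => (mem_sdiff.1 (orderEmbOfFin_mem _ hA i)).1
  have hy : ∀ j, y j ∉ X₁ := Fin.lastCases
    (by rw [hy_def, Fin.snoc_last]; exact fun h => hv (mem_union_left _ h)) fun j => by
      rw [hy_def, Fin.snoc_castSucc]; exact (mem_sdiff.1 (orderEmbOfFin_mem _ hB j)).2
  refine ⟨Fin.append u y, ?_, ?_, ?_⟩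
  · refine Fin.append_injective_iff.2 ⟨Fin.cons_injective_iff.2 ⟨?_, eA.injective⟩,
      Fin.snoc_injective_iff.2 ⟨eB.injective, ?_⟩, fun i j hij => hy j (hij ▸ hu i)⟩
    · rw [range_orderEmbOfFin]; exact fun h => (mem_sdiff.1 (mem_coe.1 h)).2 hwX.2
    · rw [range_orderEmbOfFin]
      exact fun h => hv (mem_union_right _ (mem_sdiff.1 (mem_coe.1 h)).1)
  · intro i hi
    obtain ⟨j, rfl⟩ : ∃ j : Fin 6, i = Fin.castAdd 6 j := by revert i; decide
    rw [Fin.append_left]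
    exact hu j
  · intro i hi
    obtain rfl | ⟨j, rfl⟩ : i = Fin.castAdd 6 0 ∨ ∃ j : Fin 5, i = Fin.natAdd 6 j.castSucc := by
      revert i; decide
    · rw [Fin.append_left, hu_def, Fin.cons_zero]; exact hwX.2
    · rw [Fin.append_right, hy_def, Fin.snoc_castSucc]
      exact (mem_sdiff.1 (orderEmbOfFin_mem _ hB j)).1

theorem card_inter_ne_one_of_monochromatic {χ : Finset (Fin 12) → Fin 3}
    (hH : ¬ ∃ M, TwoColoredPerfectMatching χ M) {X₁ X₂ : Finset (Fin 12)} {c₁ c₂ : Fin 3}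
    (hX₁ : X₁.card = 6) (hX₂ : X₂.card = 6)
    (hmono₁ : IsMonochromatic χ X₁ c₁) (hmono₂ : IsMonochromatic χ X₂ c₂)
    (hc : c₁ ≠ c₂) : (X₁ ∩ X₂).card ≠ 1 := by
  intro h
  obtain ⟨g, hg, hg₁, hg₂⟩ := exists_injective_mapsTo_of_card_inter_eq_one hX₁ hX₂ h
  refine false_of_monochromatic_template (χ := fun e => χ (e.image g))
    (fun ⟨M, hM⟩ => hH ⟨_, hM.image hg.bijective_of_finite⟩) ?_ ?_ hc
  · intro e he he3
    exact hmono₁ _ (image_subset_iff.2 fun i hi => hg₁ i (he hi))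
      (by rwa [card_image_of_injective _ hg])
  · intro e he he3
    exact hmono₂ _ (image_subset_iff.2 fun i hi => hg₂ i (he hi))
      (by rwa [card_image_of_injective _ hg])

theorem mono_K6_different_colors_intersect_in_two (χ : Finset (Fin 12) → Fin 3)
    (hH : ¬ ∃ M, TwoColoredPerfectMatching χ M)
    (X₁ X₂ : Finset (Fin 12)) (c₁ c₂ : Fin 3)
    (hX₁ : X₁.card = 6) (hX₂ : X₂.card = 6)
    (hmono₁ : ∀ e ⊆ X₁, e.card = 3 → χ e = c₁)
    (hmono₂ : ∀ e ⊆ X₂, e.card = 3 → χ e = c₂)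
    (hc : c₁ ≠ c₂) :
    (X₁ ∩ X₂).card = 2 := by
  have hle := card_inter_le_two_of_monochromatic hmono₁ hmono₂ hc
  have hne₀ : (X₁ ∩ X₂).card ≠ 0 := fun h => not_disjoint_of_monochromatic hH hX₁ hX₂
    hmono₁ hmono₂ (disjoint_iff_inter_eq_empty.2 (card_eq_zero.1 h))
  have hne₁ := card_inter_ne_one_of_monochromatic hH hX₁ hX₂ hmono₁ hmono₂ hc
  omega
end

section
/- If X₁ and X₂ are monochromatic 6-element subsets (K₆³'s) of two different colors in a 3-colored complete 3-uniform hypergraph on 12 vertices with no 2-colored perfect matching, then X₁ ∩ X₂ is nonempty. -/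
lemma ne_of_disj {a b : Finset (Fin 12)} (h : Disjoint a b) (ha : a.card = 3) : a ≠ b := by
  rintro rfl
  have : a = ∅ := (Finset.disjoint_self_iff_empty a).mp h
  simp [this] at ha

theorem mono_K6_different_colors_intersect (χ : Finset (Fin 12) → Fin 3)
    (hH : ¬ ∃ M, TwoColoredPerfectMatching χ M)
    (X₁ X₂ : Finset (Fin 12)) (c₁ c₂ : Fin 3)
    (hX₁ : X₁.card = 6) (hX₂ : X₂.card = 6)
    (hmono₁ : ∀ e ⊆ X₁, e.card = 3 → χ e = c₁)
    (hmono₂ : ∀ e ⊆ X₂, e.card = 3 → χ e = c₂)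
    (hc : c₁ ≠ c₂) :
    (X₁ ∩ X₂).Nonempty := by
  by_contra h
  rw [Finset.not_nonempty_iff_eq_empty] at h
  have hdisj : Disjoint X₁ X₂ := Finset.disjoint_iff_inter_eq_empty.mpr h
  obtain ⟨e₁, he₁sub, he₁card⟩ := Finset.exists_subset_card_eq (show 3 ≤ X₁.card by omega)
  obtain ⟨f₁, hf₁sub, hf₁card⟩ := Finset.exists_subset_card_eq (show 3 ≤ X₂.card by omega)
  set e₂ := X₁ \ e₁ with he₂def
  set f₂ := X₂ \ f₁ with hf₂def
  have he₂sub : e₂ ⊆ X₁ := Finset.sdiff_subset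
  have hf₂sub : f₂ ⊆ X₂ := Finset.sdiff_subset
  have he₂card : e₂.card = 3 := by
    rw [he₂def, Finset.card_sdiff_of_subset he₁sub]; omega
  have hf₂card : f₂.card = 3 := by
    rw [hf₂def, Finset.card_sdiff_of_subset hf₁sub]; omega
  have d12 : Disjoint e₁ e₂ := Finset.disjoint_sdiff
  have d34 : Disjoint f₁ f₂ := Finset.disjoint_sdiff
  have d13 : Disjoint e₁ f₁ := hdisj.mono he₁sub hf₁sub
  have d14 : Disjoint e₁ f₂ := hdisj.mono he₁sub hf₂sub
  have d23 : Disjoint e₂ f₁ := hdisj.mono he₂sub hf₁sub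
  have d24 : Disjoint e₂ f₂ := hdisj.mono he₂sub hf₂sub
  have n12 := ne_of_disj d12 he₁card
  have n13 := ne_of_disj d13 he₁card
  have n14 := ne_of_disj d14 he₁card
  have n23 := ne_of_disj d23 he₂card
  have n24 := ne_of_disj d24 he₂card
  have n34 := ne_of_disj d34 hf₁card
  have huniv : X₁ ∪ X₂ = Finset.univ := by
    apply Finset.eq_univ_of_card
    rw [Finset.card_union_of_disjoint hdisj]
    simp [hX₁, hX₂]
  apply hH
  refine ⟨{e₁, e₂, f₁, f₂}, ?_, ?_, ?_, ?_, c₁, c₂, ?_⟩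
  · rw [Finset.card_insert_of_notMem (by simp [n12, n13, n14]),
      Finset.card_insert_of_notMem (by simp [n23, n24]),
      Finset.card_insert_of_notMem (by simp [n34]),
      Finset.card_singleton]
  · intro e he
    simp only [Finset.mem_insert, Finset.mem_singleton] at he
    rcases he with rfl | rfl | rfl | rfl <;> assumption
  · intro e he f hf hne
    simp only [Finset.mem_insert, Finset.mem_singleton] at he hf
    rcases he with rfl | rfl | rfl | rfl <;> rcases hf with rfl | rfl | rfl | rfl <;>
      first
        | exact absurd rfl hne
        | assumption
        | exact d12.symm
        | exact d13.symm
        | exact d14.symm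
        | exact d23.symm
        | exact d24.symm
        | exact d34.symm
  · intro v
    have hv : v ∈ X₁ ∪ X₂ := by rw [huniv]; exact Finset.mem_univ v
    rw [Finset.mem_union] at hv
    rcases hv with hv | hv
    · by_cases h1 : v ∈ e₁
      · exact ⟨e₁, by simp, h1⟩
      · exact ⟨e₂, by simp, Finset.mem_sdiff.mpr ⟨hv, h1⟩⟩
    · by_cases h1 : v ∈ f₁
      · exact ⟨f₁, by simp, h1⟩
      · exact ⟨f₂, by simp, Finset.mem_sdiff.mpr ⟨hv, h1⟩⟩
  · intro e he
    simp only [Finset.mem_insert, Finset.mem_singleton] at he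
    rcases he with rfl | rfl | rfl | rfl
    · exact Or.inl (hmono₁ _ he₁sub he₁card)
    · exact Or.inl (hmono₁ _ he₂sub he₂card)
    · exact Or.inr (hmono₂ _ hf₁sub hf₁card)
    · exact Or.inr (hmono₂ _ hf₂sub hf₂card)
end

section
/- Any disk contains a 5-element subset whose 3-subsets use all three colors. That is, if a 3-colored 3-uniform hypergraph contains three monochromatic complete 6-vertex subgraphs X₁, X₂, X₃ in three distinct colors with |Xᵢ ∩ Xⱼ| = 2 for i ≠ j and X₁ ∩ X₂ ∩ X₃ = ∅, then there exist 5 vertices inducing 3-subsets of all three colors. -/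
theorem disk_contains_rainbow_K5 {α : Type*} [DecidableEq α]
    (χ : Finset α → Fin 3) (X₁ X₂ X₃ : Finset α) (c₁ c₂ c₃ : Fin 3)
    (hX₁ : X₁.card = 6) (hX₂ : X₂.card = 6) (hX₃ : X₃.card = 6)
    (hc₁₂ : c₁ ≠ c₂) (hc₁₃ : c₁ ≠ c₃) (hc₂₃ : c₂ ≠ c₃)
    (hmono₁ : ∀ e ⊆ X₁, e.card = 3 → χ e = c₁)
    (hmono₂ : ∀ e ⊆ X₂, e.card = 3 → χ e = c₂)
    (hmono₃ : ∀ e ⊆ X₃, e.card = 3 → χ e = c₃)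
    (hi₁₂ : (X₁ ∩ X₂).card = 2) (hi₁₃ : (X₁ ∩ X₃).card = 2)
    (hi₂₃ : (X₂ ∩ X₃).card = 2) (htriple : X₁ ∩ X₂ ∩ X₃ = ∅) :
    ∃ S : Finset α, S.card = 5 ∧ S ⊆ X₁ ∪ X₂ ∪ X₃ ∧
      ∀ c : Fin 3, c = c₁ ∨ c = c₂ ∨ c = c₃ →
        ∃ e ⊆ S, e.card = 3 ∧ χ e = c := by
  obtain ⟨a, b, hab, hab'⟩ := Finset.card_eq_two.mp hi₁₂
  obtain ⟨c, d, hcd, hcd'⟩ := Finset.card_eq_two.mp hi₂₃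
  obtain ⟨e, f, hef, hef'⟩ := Finset.card_eq_two.mp hi₁₃
  -- memberships
  have ha1 : a ∈ X₁ := (Finset.mem_inter.mp (hab' ▸ Finset.mem_insert_self a {b})).1
  have ha2 : a ∈ X₂ := (Finset.mem_inter.mp (hab' ▸ Finset.mem_insert_self a {b})).2
  have hb1 : b ∈ X₁ := (Finset.mem_inter.mp (by rw [hab']; simp)).1
  have hb2 : b ∈ X₂ := (Finset.mem_inter.mp (by rw [hab']; simp : b ∈ X₁ ∩ X₂)).2
  have hc2 : c ∈ X₂ := (Finset.mem_inter.mp (by rw [hcd']; simp : c ∈ X₂ ∩ X₃)).1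
  have hc3 : c ∈ X₃ := (Finset.mem_inter.mp (by rw [hcd']; simp : c ∈ X₂ ∩ X₃)).2
  have hd2 : d ∈ X₂ := (Finset.mem_inter.mp (by rw [hcd']; simp : d ∈ X₂ ∩ X₃)).1
  have hd3 : d ∈ X₃ := (Finset.mem_inter.mp (by rw [hcd']; simp : d ∈ X₂ ∩ X₃)).2
  have he1 : e ∈ X₁ := (Finset.mem_inter.mp (by rw [hef']; simp : e ∈ X₁ ∩ X₃)).1
  have he3 : e ∈ X₃ := (Finset.mem_inter.mp (by rw [hef']; simp : e ∈ X₁ ∩ X₃)).2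
  -- no point is in all three
  have hno : ∀ x, x ∈ X₁ → x ∈ X₂ → x ∈ X₃ → False := by
    intro x h1 h2 h3
    have : x ∈ X₁ ∩ X₂ ∩ X₃ := by simp [h1, h2, h3]
    rw [htriple] at this; exact absurd this (Finset.notMem_empty x)
  have ha3 : a ∉ X₃ := fun h => hno a ha1 ha2 h
  have hb3 : b ∉ X₃ := fun h => hno b hb1 hb2 h
  have hc1 : c ∉ X₁ := fun h => hno c h hc2 hc3
  have hd1 : d ∉ X₁ := fun h => hno d h hd2 hd3
  have he2 : e ∉ X₂ := fun h => hno e he1 h he3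
  -- pairwise distinct
  have hac : a ≠ c := fun h => hc1 (h ▸ ha1)
  have had : a ≠ d := fun h => hd1 (h ▸ ha1)
  have hae : a ≠ e := fun h => he2 (h ▸ ha2)
  have hbc : b ≠ c := fun h => hc1 (h ▸ hb1)
  have hbd : b ≠ d := fun h => hd1 (h ▸ hb1)
  have hbe : b ≠ e := fun h => he2 (h ▸ hb2)
  have hce : c ≠ e := fun h => he2 (h ▸ hc2)
  have hde : d ≠ e := fun h => he2 (h ▸ hd2)
  refine ⟨{a, b, c, d, e}, ?_, ?_, ?_⟩
  · rw [Finset.card_insert_of_notMem (by simp [hab, hac, had, hae]),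
      Finset.card_insert_of_notMem (by simp [hbc, hbd, hbe]),
      Finset.card_insert_of_notMem (by simp [hcd, hce]),
      Finset.card_insert_of_notMem (by simp [hde]), Finset.card_singleton]
  · intro x hx
    simp only [Finset.mem_insert, Finset.mem_singleton] at hx
    simp only [Finset.mem_union]
    rcases hx with rfl | rfl | rfl | rfl | rfl
    · exact Or.inl (Or.inl ha1)
    · exact Or.inl (Or.inl hb1)
    · exact Or.inl (Or.inr hc2)
    · exact Or.inl (Or.inr hd2)
    · exact Or.inr he3
  · intro col hcol
    have card3 : ∀ x y z : α, x ≠ y → x ≠ z → y ≠ z →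
        ({x, y, z} : Finset α).card = 3 := by
      intro x y z h1 h2 h3
      rw [Finset.card_insert_of_notMem (by simp [h1, h2]),
        Finset.card_insert_of_notMem (by simp [h3]), Finset.card_singleton]
    rcases hcol with rfl | rfl | rfl
    · refine ⟨{a, b, e}, ?_, card3 a b e hab hae hbe, ?_⟩
      · intro x hx; simp only [Finset.mem_insert, Finset.mem_singleton] at hx
        rcases hx with rfl | rfl | rfl <;> simp
      · exact hmono₁ _ (by
          intro x hx; simp only [Finset.mem_insert, Finset.mem_singleton] at hx
          rcases hx with rfl | rfl | rfl <;> assumption) (card3 a b e hab hae hbe)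
    · refine ⟨{a, b, c}, ?_, card3 a b c hab hac hbc, ?_⟩
      · intro x hx; simp only [Finset.mem_insert, Finset.mem_singleton] at hx
        rcases hx with rfl | rfl | rfl <;> simp
      · exact hmono₂ _ (by
          intro x hx; simp only [Finset.mem_insert, Finset.mem_singleton] at hx
          rcases hx with rfl | rfl | rfl <;> assumption) (card3 a b c hab hac hbc)
    · refine ⟨{c, d, e}, ?_, card3 c d e hcd hce hde, ?_⟩
      · intro x hx; simp only [Finset.mem_insert, Finset.mem_singleton] at hx
        rcases hx with rfl | rfl | rfl <;> simp
      · exact hmono₃ _ (by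
          intro x hx; simp only [Finset.mem_insert, Finset.mem_singleton] at hx
          rcases hx with rfl | rfl | rfl <;> assumption) (card3 c d e hcd hce hde)
end

section
/- Let V be a 7-element set and suppose the 3-subsets of V are colored with 2 colors c₁, c₂ such that every 6-element subset of V contains no two disjoint 3-subsets of the same color. If {v₁,v₂,v₃} has color c₁ and {v₄,v₅,v₆} has color c₂ for distinct v₁,...,v₇ ∈ V, then {v₅,v₆,v₇} has color c₂ and {v₂,v₃,v₄} has color c₁. -/
set_option maxHeartbeats 1000000


theorem B_plus_rotation {α : Type*} [DecidableEq α]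
    (χ : Finset α → Fin 2) (v₁ v₂ v₃ v₄ v₅ v₆ v₇ : α) (c₁ c₂ : Fin 2)
    (hcard : ({v₁, v₂, v₃, v₄, v₅, v₆, v₇} : Finset α).card = 7)
    (hB : ∀ S ⊆ ({v₁, v₂, v₃, v₄, v₅, v₆, v₇} : Finset α), S.card = 6 →
      ∀ e ⊆ S, ∀ f ⊆ S, e.card = 3 → f.card = 3 → Disjoint e f → χ e ≠ χ f)
    (h₁ : χ {v₁, v₂, v₃} = c₁) (h₂ : χ {v₄, v₅, v₆} = c₂) :
    χ {v₅, v₆, v₇} = c₂ ∧ χ {v₂, v₃, v₄} = c₁ := by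
  -- distinctness
  have hl : ([v₁, v₂, v₃, v₄, v₅, v₆, v₇] : List α).toFinset =
      ({v₁, v₂, v₃, v₄, v₅, v₆, v₇} : Finset α) := by simp
  have hnodup : ([v₁, v₂, v₃, v₄, v₅, v₆, v₇] : List α).Nodup := by
    have h1 : ([v₁, v₂, v₃, v₄, v₅, v₆, v₇] : List α).dedup.length = 7 := by
      rw [← List.card_toFinset, hl, hcard]
    have h2 := List.dedup_sublist ([v₁, v₂, v₃, v₄, v₅, v₆, v₇] : List α)
    have h3 : ([v₁, v₂, v₃, v₄, v₅, v₆, v₇] : List α).dedup =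
        [v₁, v₂, v₃, v₄, v₅, v₆, v₇] := h2.eq_of_length (by simp [h1])
    rw [← h3]; exact List.nodup_dedup _
  simp only [List.nodup_cons, List.mem_cons, List.not_mem_nil, or_false,
    not_or, List.nodup_nil, and_true] at hnodup
  obtain ⟨⟨n12, n13, n14, n15, n16, n17⟩, ⟨n23, n24, n25, n26, n27⟩,
    ⟨n34, n35, n36, n37⟩, ⟨n45, n46, n47⟩, ⟨n56, n57⟩, n67⟩ := hnodup
  have fin2 : ∀ a b c : Fin 2, a ≠ b → b ≠ c → a = c := by decide
  -- c₁ ≠ c₂ : use S = all minus v₇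
  have hc : c₁ ≠ c₂ := by
    rw [← h₁, ← h₂]
    refine hB {v₁, v₂, v₃, v₄, v₅, v₆} ?_ ?_ {v₁, v₂, v₃} ?_ {v₄, v₅, v₆} ?_ ?_ ?_ ?_
    · intro x hx; simp only [Finset.mem_insert, Finset.mem_singleton] at hx ⊢; rcases hx with rfl | rfl | rfl | rfl | rfl | rfl <;> simp
    · have : ({v₁, v₂, v₃, v₄, v₅, v₆} : Finset α) = ([v₁, v₂, v₃, v₄, v₅, v₆] : List α).toFinset := by simp
      rw [this, List.toFinset_card_of_nodup (by simp [n12, n13, n14, n15, n16, n23, n24, n25, n26, n34, n35, n36, n45, n46, n56])]; rfl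
    · intro x hx; simp only [Finset.mem_insert, Finset.mem_singleton] at hx ⊢; rcases hx with rfl | rfl | rfl | rfl | rfl | rfl <;> simp
    · intro x hx; simp only [Finset.mem_insert, Finset.mem_singleton] at hx ⊢; rcases hx with rfl | rfl | rfl | rfl | rfl | rfl <;> simp
    · have : ({v₁, v₂, v₃} : Finset α) = ([v₁, v₂, v₃] : List α).toFinset := by simp
      rw [this, List.toFinset_card_of_nodup (by simp [n12, n13, n23])]; rfl
    · have : ({v₄, v₅, v₆} : Finset α) = ([v₄, v₅, v₆] : List α).toFinset := by simp
      rw [this, List.toFinset_card_of_nodup (by simp [n45, n46, n56])]; rfl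
    · simp only [Finset.disjoint_left, Finset.mem_insert, Finset.mem_singleton]
      rintro x (rfl | rfl | rfl) (rfl | rfl | rfl) <;> exact absurd rfl (by assumption)
  -- χ {v₅,v₆,v₇} ≠ c₁ : S = all minus v₄
  have ha : c₁ ≠ χ {v₅, v₆, v₇} := by
    rw [← h₁]
    refine hB {v₁, v₂, v₃, v₅, v₆, v₇} ?_ ?_ {v₁, v₂, v₃} ?_ {v₅, v₆, v₇} ?_ ?_ ?_ ?_
    · intro x hx; simp only [Finset.mem_insert, Finset.mem_singleton] at hx ⊢; rcases hx with rfl | rfl | rfl | rfl | rfl | rfl <;> simp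
    · have : ({v₁, v₂, v₃, v₅, v₆, v₇} : Finset α) = ([v₁, v₂, v₃, v₅, v₆, v₇] : List α).toFinset := by simp
      rw [this, List.toFinset_card_of_nodup (by simp [n12, n13, n15, n16, n17, n23, n25, n26, n27, n35, n36, n37, n56, n57, n67])]; rfl
    · intro x hx; simp only [Finset.mem_insert, Finset.mem_singleton] at hx ⊢; rcases hx with rfl | rfl | rfl | rfl | rfl | rfl <;> simp
    · intro x hx; simp only [Finset.mem_insert, Finset.mem_singleton] at hx ⊢; rcases hx with rfl | rfl | rfl | rfl | rfl | rfl <;> simp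
    · have : ({v₁, v₂, v₃} : Finset α) = ([v₁, v₂, v₃] : List α).toFinset := by simp
      rw [this, List.toFinset_card_of_nodup (by simp [n12, n13, n23])]; rfl
    · have : ({v₅, v₆, v₇} : Finset α) = ([v₅, v₆, v₇] : List α).toFinset := by simp
      rw [this, List.toFinset_card_of_nodup (by simp [n56, n57, n67])]; rfl
    · simp only [Finset.disjoint_left, Finset.mem_insert, Finset.mem_singleton]
      rintro x (rfl | rfl | rfl) (rfl | rfl | rfl) <;> exact absurd rfl (by assumption)
  have hA : χ {v₅, v₆, v₇} = c₂ := fin2 _ _ _ (Ne.symm ha) hc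
  refine ⟨hA, ?_⟩
  -- χ {v₂,v₃,v₄} ≠ χ {v₅,v₆,v₇} = c₂ : S = all minus v₁
  have hb : χ {v₂, v₃, v₄} ≠ χ {v₅, v₆, v₇} := by
    refine hB {v₂, v₃, v₄, v₅, v₆, v₇} ?_ ?_ {v₂, v₃, v₄} ?_ {v₅, v₆, v₇} ?_ ?_ ?_ ?_
    · intro x hx; simp only [Finset.mem_insert, Finset.mem_singleton] at hx ⊢; rcases hx with rfl | rfl | rfl | rfl | rfl | rfl <;> simp
    · have : ({v₂, v₃, v₄, v₅, v₆, v₇} : Finset α) = ([v₂, v₃, v₄, v₅, v₆, v₇] : List α).toFinset := by simp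
      rw [this, List.toFinset_card_of_nodup (by simp [n23, n24, n25, n26, n27, n34, n35, n36, n37, n45, n46, n47, n56, n57, n67])]; rfl
    · intro x hx; simp only [Finset.mem_insert, Finset.mem_singleton] at hx ⊢; rcases hx with rfl | rfl | rfl | rfl | rfl | rfl <;> simp
    · intro x hx; simp only [Finset.mem_insert, Finset.mem_singleton] at hx ⊢; rcases hx with rfl | rfl | rfl | rfl | rfl | rfl <;> simp
    · have : ({v₂, v₃, v₄} : Finset α) = ([v₂, v₃, v₄] : List α).toFinset := by simp
      rw [this, List.toFinset_card_of_nodup (by simp [n23, n24, n34])]; rfl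
    · have : ({v₅, v₆, v₇} : Finset α) = ([v₅, v₆, v₇] : List α).toFinset := by simp
      rw [this, List.toFinset_card_of_nodup (by simp [n56, n57, n67])]; rfl
    · simp only [Finset.disjoint_left, Finset.mem_insert, Finset.mem_singleton]
      rintro x (rfl | rfl | rfl) (rfl | rfl | rfl) <;> exact absurd rfl (by assumption)
  rw [hA] at hb
  exact fin2 _ _ _ hb hc.symm
end
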